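/- arXiv:1003.5710 — 3 statements merged into one kernel-verified Lean document; each statement's English description precedes it below -/
import Mathlib

section
/- Let E and F be Banach spaces, T : E → F a bounded linear operator and β an ordinal. Suppose that for every ε > 0 there exist an ordinal β_ε < ω^β and a real δ_ε ∈ (0, 1) such that s_ε^{β_ε}(T* B_{F*}) ⊆ δ_ε · (T* B_{F*}). Then Sz(T) ≤ ω^β. -/
open NormedSpace Metric
open scoped Ordinal Pointwise

noncomputable section

/-- A subset of the norm dual is weak-* open if it is open when transported to the weak-* dual. -/
def IsWeakStarOpen {E : Type*} [NormedAddCommGroup E] [NormedSpace ℝ E]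
    (V : Set (StrongDual ℝ E)) : Prop :=
  IsOpen (StrongDual.toWeakDual '' V : Set (WeakDual ℝ E))

/-- A subset of the norm dual is weak-* compact if it is compact when transported to the
weak-* dual. -/
def IsWeakStarCompact {E : Type*} [NormedAddCommGroup E] [NormedSpace ℝ E]
    (K : Set (StrongDual ℝ E)) : Prop :=
  IsCompact (StrongDual.toWeakDual '' K : Set (WeakDual ℝ E))

/-- The Szlenk derivation `s_ε(K)`. -/
def szlenkDeriv {E : Type*} [NormedAddCommGroup E] [NormedSpace ℝ E]
    (ε : ℝ) (K : Set (StrongDual ℝ E)) : Set (StrongDual ℝ E) :=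
  {x | x ∈ K ∧ ∀ V : Set (StrongDual ℝ E), IsWeakStarOpen V → x ∈ V → ε < Metric.diam (K ∩ V)}

/-- The transfinite iterates `s_ε^α(K)` of the Szlenk derivation. -/
noncomputable def szlenkIter {E : Type*} [NormedAddCommGroup E] [NormedSpace ℝ E]
    (ε : ℝ) (K : Set (StrongDual ℝ E)) (α : Ordinal) : Set (StrongDual ℝ E) :=
  Ordinal.limitRecOn α K (fun _ S => szlenkDeriv ε S)
    (fun o _ ih => ⋂ (β : Ordinal) (h : β < o), ih β h)

/-- `Sz(K) ≤ γ` : the `γ`-th Szlenk derivative of `K` is empty for every `ε > 0`. -/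
def SzLE {E : Type*} [NormedAddCommGroup E] [NormedSpace ℝ E]
    (K : Set (StrongDual ℝ E)) (γ : Ordinal) : Prop :=
  ∀ ε : ℝ, 0 < ε → szlenkIter ε K γ = ∅

/-- The image of a set under the adjoint of an operator. -/
def adjImage {E F : Type*} [NormedAddCommGroup E] [NormedSpace ℝ E]
    [NormedAddCommGroup F] [NormedSpace ℝ F] (T : E →L[ℝ] F) (K : Set (StrongDual ℝ F)) :
    Set (StrongDual ℝ E) :=
  (fun g : StrongDual ℝ F => g.comp T) '' K

/-- `Sz(T) ≤ γ` for an operator `T`. -/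
def SzOpLE {E F : Type*} [NormedAddCommGroup E] [NormedSpace ℝ E]
    [NormedAddCommGroup F] [NormedSpace ℝ F] (T : E →L[ℝ] F) (γ : Ordinal) : Prop :=
  SzLE (adjImage T (closedBall (0 : StrongDual ℝ F) 1)) γ

/-- `Sz(E) ≤ γ` for a Banach space `E`. -/
def SzSpaceLE (E : Type*) [NormedAddCommGroup E] [NormedSpace ℝ E] (γ : Ordinal) : Prop :=
  SzLE (closedBall (0 : StrongDual ℝ E) 1) γ


section SzlenkAux

open Ordinal Set Bornology

variable {E : Type*} [NormedAddCommGroup E] [NormedSpace ℝ E]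

theorem szlenkIter_zero (ε : ℝ) (K : Set (StrongDual ℝ E)) : szlenkIter ε K 0 = K :=
  Ordinal.limitRecOn_zero ..

theorem szlenkIter_succ' (ε : ℝ) (K : Set (StrongDual ℝ E)) (α : Ordinal) :
    szlenkIter ε K (Order.succ α) = szlenkDeriv ε (szlenkIter ε K α) :=
  Ordinal.limitRecOn_succ ..

theorem szlenkIter_succ (ε : ℝ) (K : Set (StrongDual ℝ E)) (α : Ordinal) :
    szlenkIter ε K (α + 1) = szlenkDeriv ε (szlenkIter ε K α) := by
  rw [Ordinal.add_one_eq_succ]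
  exact szlenkIter_succ' ε K α

theorem szlenkIter_limit (ε : ℝ) (K : Set (StrongDual ℝ E)) {o : Ordinal} (ho : Order.IsSuccLimit o) :
    szlenkIter ε K o = ⋂ (β : Ordinal) (_ : β < o), szlenkIter ε K β :=
  Ordinal.limitRecOn_limit _ _ _ _ ho

theorem szlenkDeriv_subset (ε : ℝ) (K : Set (StrongDual ℝ E)) : szlenkDeriv ε K ⊆ K :=
  fun _ hx => hx.1

theorem szlenkIter_anti (ε : ℝ) (K : Set (StrongDual ℝ E)) :
    ∀ α' α : Ordinal, α ≤ α' → szlenkIter ε K α' ⊆ szlenkIter ε K α := by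
  intro α'
  induction α' using Ordinal.limitRecOn with
  | zero => intro α hle; rw [nonpos_iff_eq_zero.mp hle]
  | add_one o ih =>
    intro α hle
    rcases hle.lt_or_eq with hlt | rfl
    · have h1 : α ≤ o := Order.lt_add_one_iff.mp hlt
      rw [szlenkIter_succ]
      exact (szlenkDeriv_subset _ _).trans (ih α h1)
    · rfl
  | limit o ho ih =>
    intro α hle
    rcases hle.lt_or_eq with hlt | rfl
    · rw [szlenkIter_limit ε K ho]
      exact Set.iInter₂_subset α hlt
    · rfl

theorem szlenkIter_subset (ε : ℝ) (K : Set (StrongDual ℝ E)) (α : Ordinal) :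
    szlenkIter ε K α ⊆ K := by
  have := szlenkIter_anti ε K α 0 (zero_le (a := α))
  rwa [szlenkIter_zero] at this

theorem szlenkIter_mono_eps {ε ε' : ℝ} (hee : ε ≤ ε') (K : Set (StrongDual ℝ E))
    (hKb : IsBounded K) (α : Ordinal) :
    szlenkIter ε' K α ⊆ szlenkIter ε K α := by
  induction α using Ordinal.limitRecOn with
  | zero => rw [szlenkIter_zero, szlenkIter_zero]
  | add_one o ih =>
    rw [szlenkIter_succ, szlenkIter_succ]
    rintro x ⟨hx1, hx2⟩
    refine ⟨ih hx1, fun V hV hxV => ?_⟩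
    have h1 := hx2 V hV hxV
    have hb : IsBounded (szlenkIter ε K o ∩ V) :=
      (hKb.subset (szlenkIter_subset ε K o)).subset inter_subset_left
    have h2 : diam (szlenkIter ε' K o ∩ V) ≤ diam (szlenkIter ε K o ∩ V) :=
      diam_mono (inter_subset_inter_left V ih) hb
    linarith
  | limit o ho ih =>
    rw [szlenkIter_limit ε K ho, szlenkIter_limit ε' K ho]
    exact Set.iInter₂_mono fun β hβ => ih β hβ

theorem szlenkIter_mono_set (ε : ℝ) {K' K : Set (StrongDual ℝ E)} (hKK : K' ⊆ K)
    (hKb : IsBounded K) (α : Ordinal) :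
    szlenkIter ε K' α ⊆ szlenkIter ε K α := by
  induction α using Ordinal.limitRecOn with
  | zero => rwa [szlenkIter_zero, szlenkIter_zero]
  | add_one o ih =>
    rw [szlenkIter_succ, szlenkIter_succ]
    rintro x ⟨hx1, hx2⟩
    refine ⟨ih hx1, fun V hV hxV => ?_⟩
    have h1 := hx2 V hV hxV
    have hb : IsBounded (szlenkIter ε K o ∩ V) :=
      (hKb.subset (szlenkIter_subset ε K o)).subset inter_subset_left
    have h2 : diam (szlenkIter ε K' o ∩ V) ≤ diam (szlenkIter ε K o ∩ V) :=
      diam_mono (inter_subset_inter_left V ih) hb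
    linarith
  | limit o ho ih =>
    rw [szlenkIter_limit ε K ho, szlenkIter_limit ε K' ho]
    exact Set.iInter₂_mono fun β hβ => ih β hβ

theorem szlenkIter_add (ε : ℝ) (K : Set (StrongDual ℝ E)) (a : Ordinal) :
    ∀ b : Ordinal, szlenkIter ε K (a + b) = szlenkIter ε (szlenkIter ε K a) b := by
  intro b
  induction b using Ordinal.limitRecOn with
  | zero => rw [add_zero, szlenkIter_zero]
  | add_one o ih =>
    rw [← add_assoc, szlenkIter_succ, szlenkIter_succ, ih]
  | limit o ho ih =>
    rw [szlenkIter_limit ε K (Ordinal.isSuccLimit_add a ho), szlenkIter_limit _ _ ho]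
    apply subset_antisymm
    · apply Set.subset_iInter₂
      intro β hβ
      rw [← ih β hβ]
      exact Set.iInter₂_subset (a + β) (add_lt_add_right hβ a)
    · apply Set.subset_iInter₂
      intro γ hγ
      intro x hx
      have hmem : ∀ β < o, x ∈ szlenkIter ε (szlenkIter ε K a) β :=
        fun β hβ => Set.mem_iInter₂.mp hx β hβ
      rcases le_or_gt γ a with hγa | haγ
      · have h0 := hmem 0 ho.pos
        rw [← ih 0 ho.pos, add_zero] at h0
        exact szlenkIter_anti ε K a γ hγa h0
      · have h1 : a + (γ - a) = γ := Ordinal.add_sub_cancel_of_le haγ.le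
        have h2 : γ - a < o := Ordinal.sub_lt_of_lt_add (h1 ▸ hγ) ho.pos
        have h0 := hmem (γ - a) h2
        rw [← ih (γ - a) h2, h1] at h0
        exact h0

theorem isWeakStarOpen_smul {c : ℝ} (hc : c ≠ 0) {V : Set (StrongDual ℝ E)}
    (hV : IsWeakStarOpen V) : IsWeakStarOpen (c • V) := by
  have himg : StrongDual.toWeakDual '' (c • V) = c • (StrongDual.toWeakDual '' V) := by
    ext x
    simp only [Set.mem_image, Set.mem_smul_set]
    constructor
    · rintro ⟨_, ⟨v, hv, rfl⟩, rfl⟩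
      exact ⟨StrongDual.toWeakDual v, ⟨v, hv, rfl⟩, (map_smul StrongDual.toWeakDual c v).symm⟩
    · rintro ⟨_, ⟨v, hv, rfl⟩, rfl⟩
      exact ⟨c • v, ⟨v, hv, rfl⟩, map_smul StrongDual.toWeakDual c v⟩
  rw [IsWeakStarOpen, himg]
  exact hV.smul₀ hc

theorem isWeakStarOpen_univ : IsWeakStarOpen (Set.univ : Set (StrongDual ℝ E)) := by
  rw [IsWeakStarOpen, Set.image_univ, Set.range_eq_univ.mpr StrongDual.toWeakDual.surjective]
  exact isOpen_univ

theorem smul_szlenkDeriv_subset {c : ℝ} (hc : 0 < c) (ε : ℝ) (S : Set (StrongDual ℝ E)) :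
    c • szlenkDeriv ε S ⊆ szlenkDeriv (c * ε) (c • S) := by
  rintro _ ⟨x, ⟨hxS, hx⟩, rfl⟩
  refine ⟨Set.smul_mem_smul_set hxS, fun V hV hxV => ?_⟩
  have h1 : IsWeakStarOpen ((c⁻¹ : ℝ) • V) := isWeakStarOpen_smul (inv_ne_zero hc.ne') hV
  have h2 : x ∈ (c⁻¹ : ℝ) • V := by
    rw [Set.mem_smul_set_iff_inv_smul_mem₀ (inv_ne_zero hc.ne'), inv_inv]
    exact hxV
  have h3 := hx _ h1 h2
  have h4 : c • S ∩ V = c • (S ∩ c⁻¹ • V) := by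
    rw [Set.smul_set_inter₀ hc.ne', smul_inv_smul₀ hc.ne']
  rw [h4, diam_smul₀ (E := StrongDual ℝ E), Real.norm_eq_abs, abs_of_pos hc]
  exact (mul_lt_mul_iff_right₀ hc).mpr h3

theorem szlenkDeriv_smul {c : ℝ} (hc : 0 < c) (ε : ℝ) (S : Set (StrongDual ℝ E)) :
    szlenkDeriv (c * ε) (c • S) = c • szlenkDeriv ε S := by
  apply subset_antisymm _ (smul_szlenkDeriv_subset hc ε S)
  have h := smul_szlenkDeriv_subset (inv_pos.mpr hc) (c * ε) (c • S)
  rw [inv_smul_smul₀ hc.ne', inv_mul_cancel_left₀ hc.ne'] at h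
  intro x hx
  have hmem : c⁻¹ • x ∈ szlenkDeriv ε S := h (Set.smul_mem_smul_set hx)
  exact ⟨c⁻¹ • x, hmem, by dsimp only; rw [smul_smul, mul_inv_cancel₀ hc.ne', one_smul]⟩

theorem szlenkIter_smul {c : ℝ} (hc : 0 < c) (ε : ℝ) (K : Set (StrongDual ℝ E)) (α : Ordinal) :
    szlenkIter (c * ε) (c • K) α = c • szlenkIter ε K α := by
  induction α using Ordinal.limitRecOn with
  | zero => rw [szlenkIter_zero, szlenkIter_zero]
  | add_one o ih => rw [szlenkIter_succ, szlenkIter_succ, ih, szlenkDeriv_smul hc]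
  | limit o ho ih =>
    rw [szlenkIter_limit _ _ ho, szlenkIter_limit _ _ ho]
    ext x
    simp only [Set.mem_iInter, Set.mem_smul_set_iff_inv_smul_mem₀ hc.ne']
    constructor
    · intro hx β hβ
      have := hx β hβ
      rw [ih β hβ, Set.mem_smul_set_iff_inv_smul_mem₀ hc.ne'] at this
      exact this
    · intro hx β hβ
      rw [ih β hβ, Set.mem_smul_set_iff_inv_smul_mem₀ hc.ne']
      exact hx β hβ

end SzlenkAux

/-- If for every `ε > 0` there are an ordinal `β_ε < ω^β` and `δ_ε ∈ (0,1)` with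
`s_ε^{β_ε}(T* B_{F*}) ⊆ δ_ε • (T* B_{F*})`, then `Sz(T) ≤ ω^β`. -/
theorem szOpLE_of_szlenkIter_subset_smul
    {E F : Type*} [NormedAddCommGroup E] [NormedSpace ℝ E] [CompleteSpace E]
    [NormedAddCommGroup F] [NormedSpace ℝ F] [CompleteSpace F]
    (T : E →L[ℝ] F) (β : Ordinal)
    (h : ∀ ε : ℝ, 0 < ε → ∃ βε : Ordinal, βε < Ordinal.omega0 ^ β ∧ ∃ δε : ℝ,
      δε ∈ Set.Ioo (0 : ℝ) 1 ∧
      szlenkIter ε (adjImage T (closedBall (0 : StrongDual ℝ F) 1)) βε ⊆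
        δε • adjImage T (closedBall (0 : StrongDual ℝ F) 1)) :
    SzOpLE T (Ordinal.omega0 ^ β) := by
  intro ε hε
  obtain ⟨βε, hβε, δ, ⟨hδ0, hδ1⟩, hsub⟩ := h ε hε
  set K : Set (StrongDual ℝ E) := adjImage T (closedBall (0 : StrongDual ℝ F) 1) with hKdef
  have hKb : Bornology.IsBounded K := by
    have hsubK : K ⊆ closedBall 0 ‖T‖ := by
      rintro _ ⟨g, hg, rfl⟩
      rw [mem_closedBall_zero_iff] at hg ⊢
      calc ‖g.comp T‖ ≤ ‖g‖ * ‖T‖ := g.opNorm_comp_le T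
        _ ≤ 1 * ‖T‖ := mul_le_mul_of_nonneg_right hg (norm_nonneg T)
        _ = ‖T‖ := one_mul _
    exact Metric.isBounded_closedBall.subset hsubK
  have hδK : ∀ c : ℝ, 0 ≤ c → c ≤ 1 → c • K ⊆ K := by
    rintro c hc0 hc1 _ ⟨_, ⟨g, hg, rfl⟩, rfl⟩
    refine ⟨c • g, ?_, by dsimp only; rw [ContinuousLinearMap.smul_comp]⟩
    rw [mem_closedBall_zero_iff] at hg ⊢
    rw [norm_smul, Real.norm_eq_abs, abs_of_nonneg hc0]
    calc c * ‖g‖ ≤ 1 * 1 := mul_le_mul hc1 hg (norm_nonneg g) zero_le_one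
      _ = 1 := one_mul 1
  have hpow : ∀ n : ℕ, (0:ℝ) < δ ^ n := fun n => pow_pos hδ0 n
  have hpow1 : ∀ n : ℕ, δ ^ n ≤ 1 := fun n => pow_le_one₀ hδ0.le hδ1.le
  have key : ∀ n : ℕ, szlenkIter ε K (βε * n) ⊆ (δ ^ n) • K := by
    intro n
    induction n with
    | zero =>
      rw [Nat.cast_zero, mul_zero, szlenkIter_zero, pow_zero, one_smul]
    | succ n ih =>
      have h1 : szlenkIter ε K (βε * (n+1 : ℕ)) =
          szlenkIter ε (szlenkIter ε K (βε * n)) βε := by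
        rw [Nat.cast_succ, mul_add, mul_one, szlenkIter_add]
      rw [h1]
      have hKnb : Bornology.IsBounded ((δ ^ n) • K) :=
        hKb.subset (hδK _ (hpow n).le (hpow1 n))
      have h2 : szlenkIter ε (szlenkIter ε K (βε * n)) βε ⊆
          szlenkIter ε ((δ ^ n) • K) βε :=
        szlenkIter_mono_set ε ih hKnb βε
      have h3 : szlenkIter ε ((δ ^ n) • K) βε =
          (δ ^ n) • szlenkIter (ε / δ ^ n) K βε := by
        have := szlenkIter_smul (hpow n) (ε / δ ^ n) K βε
        rwa [mul_div_cancel₀ ε (hpow n).ne'] at this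
      have h4 : szlenkIter (ε / δ ^ n) K βε ⊆ szlenkIter ε K βε :=
        szlenkIter_mono_eps (le_div_self hε.le (hpow n) (hpow1 n)) K hKb βε
      refine h2.trans ?_
      rw [h3]
      calc (δ ^ n) • szlenkIter (ε / δ ^ n) K βε ⊆ (δ ^ n) • (δ • K) :=
            Set.smul_set_mono (h4.trans hsub)
        _ = (δ ^ (n+1)) • K := by rw [smul_smul, ← pow_succ]
  have hpos : (0:ℝ) < Metric.diam K + 1 := by linarith [Metric.diam_nonneg (s := K)]
  have hd : (0:ℝ) < ε / (Metric.diam K + 1) := div_pos hε hpos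
  obtain ⟨n, hn⟩ := exists_pow_lt_of_lt_one hd hδ1
  have hdiam : δ ^ n * Metric.diam K < ε := by
    rw [lt_div_iff₀ hpos] at hn
    nlinarith [hpow n, Metric.diam_nonneg (s := K)]
  have hempty : szlenkIter ε K (βε * n + 1) = ∅ := by
    rw [szlenkIter_succ]
    rw [Set.eq_empty_iff_forall_notMem]
    rintro x ⟨hx1, hx2⟩
    have h1 := hx2 Set.univ isWeakStarOpen_univ (Set.mem_univ x)
    rw [Set.inter_univ] at h1
    have hKnb : Bornology.IsBounded ((δ ^ n) • K) :=
      hKb.subset (hδK _ (hpow n).le (hpow1 n))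
    have h2 : Metric.diam (szlenkIter ε K (βε * n)) ≤ Metric.diam ((δ ^ n) • K) :=
      Metric.diam_mono (key n) hKnb
    rw [diam_smul₀ (E := StrongDual ℝ E), Real.norm_eq_abs, abs_of_pos (hpow n)] at h2
    linarith
  have hlt : ∀ m : ℕ, βε * (m : Ordinal) < Ordinal.omega0 ^ β := by
    intro m
    induction m with
    | zero =>
      rw [Nat.cast_zero, mul_zero]
      exact Ordinal.opow_pos β Ordinal.omega0_pos
    | succ m ihm =>
      rw [Nat.cast_succ, mul_add, mul_one]
      exact Ordinal.principal_add_omega0_opow β ihm hβε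
  have hle : βε * (n : Ordinal) + 1 ≤ Ordinal.omega0 ^ β := by
    rw [Ordinal.add_one_eq_succ, Order.succ_le_iff]
    exact hlt n
  rw [← Set.subset_empty_iff, ← hempty]
  exact szlenkIter_anti ε K _ _ hle
end
end

section
/- Let β be a nonzero ordinal of countable cofinality and let (β_n)_{n∈ℕ} be a superadditive cofinal sequence for ω^β, i.e. each β_n < ω^β, the set {β_n : n ∈ ℕ} is cofinal in ω^β, and β_{n₁} + β_{n₂} ≤ β_{n₁+n₂} for all n₁, n₂ ∈ ℕ. Let T : E → F be a bounded linear operator between Banach spaces that factors as T = B ∘ A through a Banach space D with Sz(D) ≤ ω^{ω^β}. Then there exists n₀ ∈ ℕ such that Sz_{1/2^n}(T) ≤ ω^{β_{n₀·n}} for all n ∈ ℕ. -/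
open NormedSpace Metric
open scoped Ordinal Pointwise

noncomputable section

open Bornology

namespace Szlenk
variable {X Y : Type*} [NormedAddCommGroup X] [NormedSpace ℝ X]
  [NormedAddCommGroup Y] [NormedSpace ℝ Y]

/-- The identity identification of the dual with the weak-* dual, at the level of sets. -/
def wset (S : Set (StrongDual ℝ X)) : Set (WeakDual ℝ X) := S

lemma image_toWeakDual (S : Set (StrongDual ℝ X)) : StrongDual.toWeakDual '' S = wset S :=
  Set.image_id' S

lemma isWeakStarOpen_iff {V : Set (StrongDual ℝ X)} : IsWeakStarOpen V ↔ IsOpen (wset V) := by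
  rw [IsWeakStarOpen, image_toWeakDual]

lemma mem_wset {S : Set (StrongDual ℝ X)} {x : StrongDual ℝ X} :
    (StrongDual.toWeakDual x) ∈ wset S ↔ x ∈ S := Iff.rfl

variable {ε ε' δ : ℝ} {K K' S S' V : Set (StrongDual ℝ X)} {α β γ : Ordinal}

lemma szlenkIter_zero : szlenkIter ε K 0 = K := Ordinal.limitRecOn_zero ..

lemma szlenkIter_succ : szlenkIter ε K (α + 1) = szlenkDeriv ε (szlenkIter ε K α) :=
  Ordinal.limitRecOn_add_one ..

lemma szlenkIter_limit (h : Order.IsSuccLimit α) :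
    szlenkIter ε K α = ⋂ (β) (_ : β < α), szlenkIter ε K β :=
  Ordinal.limitRecOn_limit _ _ _ _ h

lemma szlenkDeriv_subset : szlenkDeriv ε S ⊆ S := fun _ hx => hx.1

lemma szlenkDeriv_mono (hb : IsBounded S') (h : S ⊆ S') : szlenkDeriv ε S ⊆ szlenkDeriv ε S' := by
  rintro x ⟨hxS, hx⟩
  refine ⟨h hxS, fun V hV hxV => ?_⟩
  exact lt_of_lt_of_le (hx V hV hxV)
    (diam_mono (Set.inter_subset_inter_left _ h) (hb.subset Set.inter_subset_left))

lemma szlenkDeriv_anti (h : ε' ≤ ε) : szlenkDeriv ε S ⊆ szlenkDeriv ε' S := by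
  rintro x ⟨hxS, hx⟩
  exact ⟨hxS, fun V hV hxV => lt_of_le_of_lt h (hx V hV hxV)⟩

lemma szlenkIter_subset : szlenkIter ε K α ⊆ K := by
  induction α using Ordinal.limitRecOn with
  | zero => rw [szlenkIter_zero]
  | add_one α ih => rw [szlenkIter_succ]; exact szlenkDeriv_subset.trans ih
  | limit α hα ih =>
      rw [szlenkIter_limit hα]
      intro x hx
      have h0 := Set.mem_iInter₂.mp hx 0 hα.pos
      rwa [szlenkIter_zero] at h0

lemma szlenkIter_anti (h : α ≤ β) : szlenkIter ε K β ⊆ szlenkIter ε K α := by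
  induction β using Ordinal.limitRecOn with
  | zero => rw [nonpos_iff_eq_zero.mp h]
  | add_one β ih =>
      rcases eq_or_lt_of_le h with rfl | h'
      · exact le_refl _
      · rw [szlenkIter_succ]
        exact szlenkDeriv_subset.trans (ih (Order.lt_add_one_iff.mp h'))
  | limit β hβ ih =>
      rcases eq_or_lt_of_le h with rfl | h'
      · exact le_refl _
      · rw [szlenkIter_limit hβ]
        intro x hx
        exact Set.mem_iInter₂.mp hx α h'

lemma szlenkIter_mono (hb : IsBounded K') (h : K ⊆ K') :
    szlenkIter ε K α ⊆ szlenkIter ε K' α := by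
  induction α using Ordinal.limitRecOn with
  | zero => rw [szlenkIter_zero, szlenkIter_zero]; exact h
  | add_one α ih =>
      rw [szlenkIter_succ, szlenkIter_succ]
      exact (szlenkDeriv_mono (hb.subset szlenkIter_subset) ih)
  | limit α hα ih =>
      rw [szlenkIter_limit hα, szlenkIter_limit hα]
      exact Set.iInter₂_mono fun β hβ => ih β hβ

lemma szlenkIter_anti_eps (hb : IsBounded K) (h : ε' ≤ ε) :
    szlenkIter ε K α ⊆ szlenkIter ε' K α := by
  induction α using Ordinal.limitRecOn with
  | zero => rw [szlenkIter_zero, szlenkIter_zero]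
  | add_one α ih =>
      rw [szlenkIter_succ, szlenkIter_succ]
      exact (szlenkDeriv_mono (hb.subset szlenkIter_subset) ih).trans (szlenkDeriv_anti h)
  | limit α hα ih =>
      rw [szlenkIter_limit hα, szlenkIter_limit hα]
      exact Set.iInter₂_mono fun β hβ => ih β hβ

lemma szlenkIter_add : szlenkIter ε K (α + β) = szlenkIter ε (szlenkIter ε K α) β := by
  induction β using Ordinal.limitRecOn with
  | zero => rw [add_zero, szlenkIter_zero]
  | add_one β ih => rw [← add_assoc, szlenkIter_succ, szlenkIter_succ, ih]
  | limit β hβ ih =>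
      rw [szlenkIter_limit (Ordinal.isSuccLimit_add α hβ), szlenkIter_limit hβ]
      apply Set.Subset.antisymm
      · refine Set.subset_iInter₂ fun δ hδ => ?_
        rw [← ih δ hδ]
        intro x hx
        exact Set.mem_iInter₂.mp hx (α + δ) (by rwa [add_lt_add_iff_left])
      · refine Set.subset_iInter₂ fun γ hγ => ?_
        rcases le_or_gt γ α with hle | hlt
        · intro x hx
          have h0 := Set.mem_iInter₂.mp hx 0 hβ.pos
          rw [← ih 0 hβ.pos, add_zero] at h0
          exact szlenkIter_anti hle h0
        · have hsub : α + (γ - α) = γ := Ordinal.add_sub_cancel_of_le hlt.le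
          have hδβ : γ - α < β := by
            rwa [← add_lt_add_iff_left α, hsub]
          intro x hx
          have hm := Set.mem_iInter₂.mp hx _ hδβ
          rwa [← ih _ hδβ, hsub] at hm
end Szlenk

namespace Szlenk
variable {X Y : Type*} [NormedAddCommGroup X] [NormedSpace ℝ X]
  [NormedAddCommGroup Y] [NormedSpace ℝ Y]
variable {ε ε' δ : ℝ} {K K' S S' V : Set (StrongDual ℝ X)} {α β γ : Ordinal}

lemma szlenkDeriv_eq_diff :
    szlenkDeriv ε K = K \ ⋃₀ {V : Set (StrongDual ℝ X) | IsWeakStarOpen V ∧ diam (K ∩ V) ≤ ε} := by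
  ext x
  simp only [szlenkDeriv, Set.mem_setOf_eq, Set.mem_diff, Set.mem_sUnion, not_exists]
  constructor
  · rintro ⟨hxK, hx⟩
    exact ⟨hxK, fun V hV => absurd (hx V hV.1.1 hV.2) (not_lt.mpr hV.1.2)⟩
  · rintro ⟨hxK, hx⟩
    refine ⟨hxK, fun V hV hxV => ?_⟩
    by_contra hle
    exact hx V ⟨⟨hV, not_lt.mp hle⟩, hxV⟩

lemma isOpen_wset_sUnion {T : Set (Set (StrongDual ℝ X))} (h : ∀ V ∈ T, IsWeakStarOpen V) :
    IsWeakStarOpen (⋃₀ T) := by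
  rw [isWeakStarOpen_iff]
  have : wset (⋃₀ T) = ⋃ V ∈ T, wset V := by
    ext x; simp [wset, Set.mem_sUnion]; exact ⟨fun ⟨t, ht, hx⟩ => ⟨t, Set.mem_iUnion.mpr ⟨ht, hx⟩⟩, fun ⟨t, h⟩ => let ⟨ht, hx⟩ := Set.mem_iUnion.mp h; ⟨t, ht, hx⟩⟩
  rw [this]
  exact isOpen_biUnion fun V hV => isWeakStarOpen_iff.mp (h V hV)

lemma wcompact_szlenkDeriv (hK : IsCompact (wset K)) : IsCompact (wset (szlenkDeriv ε K)) := by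
  rw [szlenkDeriv_eq_diff]
  have hU : IsWeakStarOpen (⋃₀ {V : Set (StrongDual ℝ X) | IsWeakStarOpen V ∧ diam (K ∩ V) ≤ ε}) :=
    isOpen_wset_sUnion fun V hV => hV.1
  have : wset (K \ ⋃₀ {V : Set (StrongDual ℝ X) | IsWeakStarOpen V ∧ diam (K ∩ V) ≤ ε})
      = wset K ∩ (wset (⋃₀ {V : Set (StrongDual ℝ X) | IsWeakStarOpen V ∧ diam (K ∩ V) ≤ ε}))ᶜ := rfl
  rw [this]
  exact hK.inter_right (isWeakStarOpen_iff.mp hU).isClosed_compl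

lemma wset_iInter₂ (f : ∀ β : Ordinal, β < α → Set (StrongDual ℝ X)) :
    wset (⋂ (β) (h : β < α), f β h) = ⋂ (β) (h : β < α), wset (f β h) := rfl

lemma wcompact_szlenkIter (hK : IsCompact (wset K)) :
    IsCompact (wset (szlenkIter ε K α)) := by
  induction α using Ordinal.limitRecOn with
  | zero => rwa [szlenkIter_zero]
  | add_one α ih => rw [szlenkIter_succ]; exact wcompact_szlenkDeriv ih
  | limit α hα ih =>
      rw [szlenkIter_limit hα, wset_iInter₂]
      refine IsCompact.of_isClosed_subset hK (isClosed_biInter fun β hβ => (ih β hβ).isClosed) ?_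
      intro x hx
      have h0 := Set.mem_iInter₂.mp hx 0 hα.pos
      rwa [szlenkIter_zero] at h0

lemma exists_empty_of_limit_empty (hK : IsCompact (wset K)) (hlim : Order.IsSuccLimit α)
    (h : szlenkIter ε K α = ∅) : ∃ γ, γ < α ∧ szlenkIter ε K γ = ∅ := by
  by_contra hc
  push_neg at hc
  have hne : ∀ γ (_ : γ < α), (szlenkIter ε K γ).Nonempty := hc
  haveI : Nonempty {γ : Ordinal // γ < α} := ⟨⟨0, hlim.pos⟩⟩
  have hdir : Directed (· ⊇ ·) (fun i : {γ : Ordinal // γ < α} => wset (szlenkIter ε K i.1)) := by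
    intro i j
    refine ⟨⟨max i.1 j.1, max_lt i.2 j.2⟩, ?_, ?_⟩
    · exact szlenkIter_anti (le_max_left _ _)
    · exact szlenkIter_anti (le_max_right _ _)
  have hnon := IsCompact.nonempty_iInter_of_directed_nonempty_isCompact_isClosed
    (fun i : {γ : Ordinal // γ < α} => wset (szlenkIter ε K i.1)) hdir
    (fun i => hne i.1 i.2) (fun i => wcompact_szlenkIter hK)
    (fun i => (wcompact_szlenkIter hK).isClosed)
  obtain ⟨y, hy⟩ := hnon
  have : y ∈ wset (szlenkIter ε K α) := by
    rw [szlenkIter_limit hlim, wset_iInter₂]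
    exact Set.mem_iInter₂.mpr fun β hβ => Set.mem_iInter.mp hy ⟨β, hβ⟩
  rw [h] at this
  exact this

/-- weak-* closure -/
def wcl (S : Set (StrongDual ℝ X)) : Set (StrongDual ℝ X) := (closure (wset S) : Set (WeakDual ℝ X))

lemma subset_wcl : S ⊆ wcl S := subset_closure (X := WeakDual ℝ X)

lemma wset_wcl : wset (wcl S) = closure (wset S) := rfl

lemma wcl_subset {C : Set (StrongDual ℝ X)} (hC : IsClosed (wset C)) (h : S ⊆ C) : wcl S ⊆ C :=
  closure_minimal (h : wset S ⊆ wset C) hC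

lemma wcompact_wcl (hK : IsCompact (wset K)) (h : S ⊆ K) : IsCompact (wset (wcl S)) := by
  rw [wset_wcl]
  exact IsCompact.of_isClosed_subset hK isClosed_closure
    (closure_minimal (h : wset S ⊆ wset K) hK.isClosed)

lemma isClosed_wset_closedBall (y : StrongDual ℝ X) (r : ℝ) :
    IsClosed (wset (closedBall y r)) := WeakDual.isClosed_closedBall y r

lemma diam_wcl_le (hb : IsBounded S) : diam (wcl S) ≤ diam S := by
  rcases S.eq_empty_or_nonempty with rfl | ⟨y0, hy0⟩
  · have : wcl (∅ : Set (StrongDual ℝ X)) = ∅ := by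
      rw [wcl]; change (closure (∅ : Set (WeakDual ℝ X)) : Set (WeakDual ℝ X)) = ∅
      simp
    rw [this]
  · -- step 1 : every point of wcl S is within diam S of every point of S
    have step1 : ∀ y ∈ S, wcl S ⊆ closedBall y (diam S) := by
      intro y hy
      exact wcl_subset (isClosed_wset_closedBall y (diam S))
        (fun z hz => mem_closedBall.mpr (dist_le_diam_of_mem hb hz hy))
    have step2 : ∀ x ∈ wcl S, wcl S ⊆ closedBall x (diam S) := by
      intro x hx
      refine wcl_subset (isClosed_wset_closedBall x (diam S)) (fun z hz => ?_)
      have := step1 z hz hx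
      rwa [mem_closedBall, dist_comm] at this
    refine diam_le_of_forall_dist_le diam_nonneg ?_
    intro x hx z hz
    have h2 := step2 x hx hz
    rwa [mem_closedBall, dist_comm] at h2

lemma isBounded_wcl (hb : IsBounded S) : IsBounded (wcl S) := by
  rcases S.eq_empty_or_nonempty with rfl | ⟨y0, hy0⟩
  · have : wcl (∅ : Set (StrongDual ℝ X)) = ∅ := by
      rw [wcl]; change (closure (∅ : Set (WeakDual ℝ X)) : Set (WeakDual ℝ X)) = ∅
      simp
    rw [this]; exact Bornology.isBounded_empty
  · have : wcl S ⊆ closedBall y0 (diam S) :=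
      wcl_subset (isClosed_wset_closedBall y0 (diam S))
        (fun z hz => mem_closedBall.mpr (dist_le_diam_of_mem hb hz hy0))
    exact (isBounded_closedBall).subset this

end Szlenk

namespace Szlenk
variable {X Y : Type*} [NormedAddCommGroup X] [NormedSpace ℝ X]
  [NormedAddCommGroup Y] [NormedSpace ℝ Y]
variable {ε ε' δ : ℝ} {K K' S S' V : Set (StrongDual ℝ X)} {α β γ : Ordinal}

section Affine
variable (c : ℝ) (x : StrongDual ℝ X)

/-- The affine map `y ↦ x + c • y` on the dual. -/
def affMap : StrongDual ℝ X → StrongDual ℝ X := fun y => x + c • y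

lemma affMap_leftInv (hc : c ≠ 0) :
    Function.LeftInverse (fun y : StrongDual ℝ X => c⁻¹ • y + (-(c⁻¹ • x))) (affMap c x) := by
  intro y
  simp [affMap, smul_add, smul_smul, inv_mul_cancel₀ hc, add_comm]

lemma affMap_rightInv (hc : c ≠ 0) :
    Function.RightInverse (fun y : StrongDual ℝ X => c⁻¹ • y + (-(c⁻¹ • x))) (affMap c x) := by
  intro y
  simp [affMap, smul_add, smul_smul, mul_inv_cancel₀ hc, smul_neg]

lemma affMap_bijective (hc : c ≠ 0) : Function.Bijective (affMap c x) :=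
  ⟨(affMap_leftInv c x hc).injective, (affMap_rightInv c x hc).surjective⟩

/-- `affMap` viewed as a self-map of the weak-* dual. -/
def waff : WeakDual ℝ X → WeakDual ℝ X := affMap c x

/-- The inverse of `affMap` viewed as a self-map of the weak-* dual. -/
def waffInv : WeakDual ℝ X → WeakDual ℝ X :=
  fun y : StrongDual ℝ X => c⁻¹ • y + (-(c⁻¹ • x))

lemma continuous_waff : Continuous (waff c x) := by
  show Continuous fun y : WeakDual ℝ X => (StrongDual.toWeakDual x) + c • y
  exact continuous_const.add (continuous_id.const_smul c)

lemma continuous_waffInv : Continuous (waffInv c x) := by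
  show Continuous fun y : WeakDual ℝ X => c⁻¹ • y + (-(c⁻¹ • (StrongDual.toWeakDual x)))
  exact (continuous_id.const_smul c⁻¹).add continuous_const

lemma isWeakStarOpen_affMap_preimage (hV : IsWeakStarOpen V) :
    IsWeakStarOpen (affMap c x ⁻¹' V) := by
  rw [isWeakStarOpen_iff] at hV ⊢
  have : wset (affMap c x ⁻¹' V) = waff c x ⁻¹' (wset V) := rfl
  rw [this]
  exact (continuous_waff c x).isOpen_preimage _ hV

lemma isWeakStarOpen_affMap_image (hc : c ≠ 0) (hV : IsWeakStarOpen V) :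
    IsWeakStarOpen (affMap c x '' V) := by
  rw [isWeakStarOpen_iff] at hV ⊢
  have him : affMap c x '' V = (fun y : StrongDual ℝ X => c⁻¹ • y + (-(c⁻¹ • x))) ⁻¹' V := by
    rw [Set.image_eq_preimage_of_inverse (affMap_leftInv c x hc) (affMap_rightInv c x hc)]
  have : wset (affMap c x '' V) = waffInv c x ⁻¹' (wset V) := by
    rw [him]; rfl
  rw [this]
  exact (continuous_waffInv c x).isOpen_preimage _ hV

lemma diam_affMap_image (hc : 0 < c) (S : Set (StrongDual ℝ X)) :
    diam (affMap c x '' S) = c * diam S := by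
  have h1 : affMap c x '' S = (fun y : StrongDual ℝ X => x + y) '' ((fun y : StrongDual ℝ X => c • y) '' S) := by
    rw [← Set.image_comp]; rfl
  have hiso : Isometry (fun y : StrongDual ℝ X => x + y) :=
    Isometry.of_dist_eq (by simp [dist_eq_norm])
  rw [h1, hiso.diam_image, Set.image_smul, diam_smul₀ c S, Real.norm_eq_abs, abs_of_pos hc]

lemma affMap_image_inter (hc : c ≠ 0) (A B : Set (StrongDual ℝ X)) :
    affMap c x '' (A ∩ affMap c x ⁻¹' B) = (affMap c x '' A) ∩ B := by
  rw [Set.image_inter (affMap_bijective c x hc).injective,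
    Set.image_preimage_eq B (affMap_bijective c x hc).surjective]

lemma szlenkDeriv_affMap (hc : 0 < c) :
    szlenkDeriv (c * ε) (affMap c x '' K) = affMap c x '' szlenkDeriv ε K := by
  have hcne := hc.ne'
  ext z
  constructor
  · rintro ⟨hzK, hz⟩
    obtain ⟨y, hyK, rfl⟩ := hzK
    refine ⟨y, ⟨hyK, fun V' hV' hyV' => ?_⟩, rfl⟩
    have himV : IsWeakStarOpen (affMap c x '' V') := isWeakStarOpen_affMap_image c x hcne hV'
    have := hz _ himV ⟨y, hyV', rfl⟩
    have heq : (affMap c x '' K) ∩ (affMap c x '' V') = affMap c x '' (K ∩ V') := by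
      rw [Set.image_inter (affMap_bijective c x hcne).injective]
    rw [heq, diam_affMap_image c x hc] at this
    exact lt_of_mul_lt_mul_left this hc.le
  · rintro ⟨y, ⟨hyK, hy⟩, rfl⟩
    refine ⟨⟨y, hyK, rfl⟩, fun V hV hzV => ?_⟩
    have hpre : IsWeakStarOpen (affMap c x ⁻¹' V) := isWeakStarOpen_affMap_preimage c x hV
    have := hy _ hpre hzV
    have heq := affMap_image_inter c x hcne K V
    calc c * ε < c * diam (K ∩ affMap c x ⁻¹' V) := by
          exact (mul_lt_mul_iff_right₀ hc).mpr this
      _ = diam (affMap c x '' (K ∩ affMap c x ⁻¹' V)) := (diam_affMap_image c x hc _).symm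
      _ = diam ((affMap c x '' K) ∩ V) := by rw [heq]

lemma szlenkIter_affMap (hc : 0 < c) :
    szlenkIter (c * ε) (affMap c x '' K) α = affMap c x '' szlenkIter ε K α := by
  induction α using Ordinal.limitRecOn with
  | zero => rw [szlenkIter_zero, szlenkIter_zero]
  | add_one α ih => rw [szlenkIter_succ, szlenkIter_succ, ih, szlenkDeriv_affMap c x hc]
  | limit α hα ih =>
      rw [szlenkIter_limit hα, szlenkIter_limit hα]
      rw [Set.image_iInter (affMap_bijective c x hc.ne')]
      exact Set.iInter_congr fun β =>
        (Set.image_iInter (affMap_bijective c x hc.ne') _).symm ▸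
          Set.iInter_congr fun hβ => ih β hβ
end Affine

lemma szlenkIter_inter_open_subset (hK : IsCompact (wset K)) (hKb : IsBounded K)
    (hV : IsWeakStarOpen V) :
    szlenkIter ε K α ∩ V ⊆ szlenkIter ε (wcl (K ∩ V)) α := by
  have hLK : wcl (K ∩ V) ⊆ K := wcl_subset hK.isClosed Set.inter_subset_left
  have hLb : IsBounded (wcl (K ∩ V)) := hKb.subset hLK
  induction α using Ordinal.limitRecOn with
  | zero => rw [szlenkIter_zero, szlenkIter_zero]; exact fun z hz => subset_wcl hz
  | add_one α ih =>
      rw [szlenkIter_succ, szlenkIter_succ]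
      rintro z ⟨⟨hz1, hz2⟩, hzV⟩
      refine ⟨ih ⟨hz1, hzV⟩, fun W hW hzW => ?_⟩
      have hVW : IsWeakStarOpen (V ∩ W) := by
        rw [isWeakStarOpen_iff] at hV hW ⊢
        exact hV.inter hW
      have hlt := hz2 (V ∩ W) hVW ⟨hzV, hzW⟩
      refine lt_of_lt_of_le hlt (diam_mono ?_ ?_)
      · intro u ⟨hu1, hu2, hu3⟩
        exact ⟨ih ⟨hu1, hu2⟩, hu3⟩
      · exact hLb.subset (Set.inter_subset_left.trans szlenkIter_subset)
  | limit α hα ih =>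
      rw [szlenkIter_limit hα, szlenkIter_limit hα]
      rintro z ⟨hz, hzV⟩
      exact Set.mem_iInter₂.mpr fun β hβ =>
        ih β hβ ⟨Set.mem_iInter₂.mp hz β hβ, hzV⟩

/-- Homogeneity consequence: if the `α`-th `ε`-derivation of the unit ball is empty, then on any
weak-*-compact subset of the ball the `(ε*δ)`-derivation of order `α` is inside one step of the
`δ`-derivation. -/
lemma szlenkIter_subset_szlenkDeriv (hB : szlenkIter ε (closedBall (0 : StrongDual ℝ X) 1) α = ∅)
    (hδ : 0 < δ) (hK : IsCompact (wset K)) (hKb : IsBounded K) :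
    szlenkIter (ε * δ) K α ⊆ szlenkDeriv δ K := by
  intro z hz
  by_contra hzd
  have hzK : z ∈ K := szlenkIter_subset hz
  have : ∃ V, IsWeakStarOpen V ∧ z ∈ V ∧ diam (K ∩ V) ≤ δ := by
    by_contra hno
    push_neg at hno
    exact hzd ⟨hzK, fun V hV hzV => hno V hV hzV⟩
  obtain ⟨V, hV, hzV, hdiam⟩ := this
  set L := wcl (K ∩ V) with hLdef
  have hzL : z ∈ L := subset_wcl ⟨hzK, hzV⟩
  have hzIterL : z ∈ szlenkIter (ε * δ) L α :=
    szlenkIter_inter_open_subset hK hKb hV ⟨hz, hzV⟩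
  have hLb : IsBounded L := isBounded_wcl (hKb.subset Set.inter_subset_left)
  have hLdiam : diam L ≤ δ := le_trans (diam_wcl_le (hKb.subset Set.inter_subset_left)) hdiam
  -- L is contained in the affine image of the ball
  have hLsub : L ⊆ affMap δ z '' closedBall (0 : StrongDual ℝ X) 1 := by
    intro w hw
    refine ⟨δ⁻¹ • (w - z), ?_, ?_⟩
    · rw [mem_closedBall_zero_iff, norm_smul, Real.norm_eq_abs, abs_of_pos (inv_pos.mpr hδ)]
      have hwz : ‖w - z‖ ≤ δ := by
        have := dist_le_diam_of_mem hLb hw hzL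
        rw [dist_eq_norm] at this
        exact this.trans hLdiam
      rw [inv_mul_le_iff₀ hδ, mul_one]
      exact hwz
    · rw [affMap, smul_smul, mul_inv_cancel₀ hδ.ne', one_smul]
      abel
  have hballb : IsBounded (affMap δ z '' closedBall (0 : StrongDual ℝ X) 1) := by
    refine (isBounded_closedBall (x := z) (r := δ)).subset ?_
    rintro _ ⟨w, hw, rfl⟩
    rw [mem_closedBall_zero_iff] at hw
    rw [mem_closedBall, dist_eq_norm, affMap]
    have : z + δ • w - z = δ • w := by abel
    rw [this, norm_smul, Real.norm_eq_abs, abs_of_pos hδ]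
    calc δ * ‖w‖ ≤ δ * 1 := by exact mul_le_mul_of_nonneg_left hw hδ.le
      _ = δ := mul_one δ
  have h1 : szlenkIter (ε * δ) L α ⊆ szlenkIter (ε * δ) (affMap δ z '' closedBall 0 1) α :=
    szlenkIter_mono hballb hLsub
  have h2 : szlenkIter (δ * ε) (affMap δ z '' closedBall (0 : StrongDual ℝ X) 1) α
      = affMap δ z '' szlenkIter ε (closedBall 0 1) α := szlenkIter_affMap δ z hδ
  rw [hB, Set.image_empty, mul_comm δ ε] at h2
  have := h1 hzIterL
  rw [h2] at this
  exact this

/-- Submultiplicativity of the Szlenk derivation on the dual unit ball. -/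
lemma szlenkIter_submul (hε : szlenkIter ε (closedBall (0 : StrongDual ℝ X) 1) α = ∅)
    (hδ : 0 < δ) (hδe : szlenkIter δ (closedBall (0 : StrongDual ℝ X) 1) γ = ∅) :
    szlenkIter (ε * δ) (closedBall (0 : StrongDual ℝ X) 1) (α * γ) = ∅ := by
  set B₁ := closedBall (0 : StrongDual ℝ X) 1 with hB₁
  have hBb : IsBounded B₁ := isBounded_closedBall
  have hBc : IsCompact (wset B₁) := WeakDual.isCompact_closedBall (0 : StrongDual ℝ X) 1
  have key : ∀ j : Ordinal, szlenkIter (ε * δ) B₁ (α * j) ⊆ szlenkIter δ B₁ j := by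
    intro j
    induction j using Ordinal.limitRecOn with
    | zero => rw [mul_zero, szlenkIter_zero, szlenkIter_zero]
    | add_one j ih =>
        rw [mul_add_one, szlenkIter_add, szlenkIter_succ]
        refine le_trans (szlenkIter_mono (hBb.subset szlenkIter_subset) ih) ?_
        exact szlenkIter_subset_szlenkDeriv hε hδ (wcompact_szlenkIter hBc)
          (hBb.subset szlenkIter_subset)
    | limit j hj ih =>
        rw [szlenkIter_limit hj]
        intro z hz
        refine Set.mem_iInter₂.mpr fun i hi => ih i hi ?_
        exact szlenkIter_anti (mul_le_mul_right hi.le α) hz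
  rw [← Set.subset_empty_iff, ← hδe]
  exact key γ
end Szlenk

namespace Szlenk
variable {X Y : Type*} [NormedAddCommGroup X] [NormedSpace ℝ X]
  [NormedAddCommGroup Y] [NormedSpace ℝ Y]
variable {ε ε' δ : ℝ} {α β γ : Ordinal}

/-- The adjoint of an operator, as a map of dual spaces. -/
def adjMap (A : X →L[ℝ] Y) : StrongDual ℝ Y → StrongDual ℝ X := fun g => g.comp A

/-- The adjoint viewed as a map of weak-* duals. -/
def wadj (A : X →L[ℝ] Y) : WeakDual ℝ Y → WeakDual ℝ X := adjMap A

lemma continuous_wadj (A : X →L[ℝ] Y) : Continuous (wadj A) := by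
  apply WeakBilin.continuous_of_continuous_eval
  intro y
  exact WeakDual.eval_continuous (A y)

lemma isBounded_adjMap_image (A : X →L[ℝ] Y) {K : Set (StrongDual ℝ Y)} (hKb : IsBounded K) :
    IsBounded (adjMap A '' K) := by
  obtain ⟨R, hR⟩ := hKb.subset_closedBall 0
  refine (isBounded_closedBall (x := (0 : StrongDual ℝ X)) (r := R * ‖A‖)).subset ?_
  rintro _ ⟨u, huK, rfl⟩
  rw [mem_closedBall_zero_iff]
  have hu : ‖u‖ ≤ R := mem_closedBall_zero_iff.mp (hR huK)
  exact (ContinuousLinearMap.opNorm_comp_le u A).trans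
    (mul_le_mul_of_nonneg_right hu (norm_nonneg A))

lemma szlenkDeriv_adj (A : X →L[ℝ] Y) {K : Set (StrongDual ℝ Y)} (hK : IsCompact (wset K))
    (hKb : IsBounded K) (hε' : 0 ≤ ε') (hc : 2 * ‖A‖ * ε' ≤ ε) :
    szlenkDeriv ε (adjMap A '' K) ⊆ adjMap A '' szlenkDeriv ε' K := by
  rintro z ⟨hzim, hzprop⟩
  by_contra hno
  have hfib : ∀ y ∈ K, adjMap A y = z → ∃ V, IsWeakStarOpen V ∧ y ∈ V ∧ diam (K ∩ V) ≤ ε' := by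
    intro y hy hyz
    by_contra hy'
    push_neg at hy'
    exact hno ⟨y, ⟨hy, fun V hV hyV => hy' V hV hyV⟩, hyz⟩
  set F := K ∩ adjMap A ⁻¹' {z} with hFdef
  have hFne : F.Nonempty := by
    obtain ⟨y, hy, hyz⟩ := hzim; exact ⟨y, hy, hyz⟩
  have hFc : IsCompact (wset F) := by
    have hwF : wset F = wset K ∩ wadj A ⁻¹' {StrongDual.toWeakDual z} := rfl
    rw [hwF]
    exact hK.inter_right (isClosed_singleton.preimage (continuous_wadj A))
  choose! Vf hVo hVm hVd using hfib
  -- finite subcover of the fiber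
  obtain ⟨t, htF, htfin, htcov⟩ := hFc.elim_finite_subcover_image
    (fun y (hy : y ∈ F) => isWeakStarOpen_iff.mp (hVo y hy.1 hy.2))
    (fun y' hy' => by
      have hy'F : y' ∈ F := hy'
      exact Set.mem_biUnion hy'F (hVm y' hy'F.1 hy'F.2))
  set U := ⋃ y ∈ t, Vf y with hUdef
  set L := K \ U with hLdef
  have hwU : IsOpen (wset U) := by
    have : wset U = ⋃ y ∈ t, wset (Vf y) := rfl
    rw [this]
    exact isOpen_biUnion fun y hy => isWeakStarOpen_iff.mp (hVo y (htF hy).1 (htF hy).2)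
  have hLc : IsCompact (wset L) := by
    have : wset L = wset K ∩ (wset U)ᶜ := rfl
    rw [this]
    exact hK.inter_right hwU.isClosed_compl
  have hzL : z ∉ adjMap A '' L := by
    rintro ⟨u, ⟨huK, huU⟩, huz⟩
    have huF : u ∈ F := ⟨huK, huz⟩
    exact huU (htcov huF)
  set W := (adjMap A '' L)ᶜ with hWdef
  have hWopen : IsWeakStarOpen W := by
    rw [isWeakStarOpen_iff]
    have : wset W = (wadj A '' wset L)ᶜ := rfl
    rw [this]
    exact (hLc.image (continuous_wadj A)).isClosed.isOpen_compl
  have hlt := hzprop W hWopen hzL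
  have hdist : ∀ p ∈ (adjMap A '' K) ∩ W, dist p z ≤ ‖A‖ * ε' := by
    rintro p ⟨⟨u, huK, rfl⟩, hpW⟩
    have huU : u ∈ U := by
      by_contra h
      exact hpW ⟨u, ⟨huK, h⟩, rfl⟩
    obtain ⟨y, hyt, huVy⟩ := Set.mem_iUnion₂.mp huU
    have hyF : y ∈ F := htF hyt
    have hyVy : y ∈ Vf y := hVm y hyF.1 hyF.2
    have hduy : dist u y ≤ ε' :=
      (dist_le_diam_of_mem (hKb.subset Set.inter_subset_left) ⟨huK, huVy⟩ ⟨hyF.1, hyVy⟩).trans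
        (hVd y hyF.1 hyF.2)
    have hz_eq : adjMap A y = z := hyF.2
    rw [← hz_eq]
    have hsub : adjMap A u - adjMap A y = (u - y).comp A := by
      rw [adjMap]
      exact (ContinuousLinearMap.sub_comp u y A).symm
    rw [dist_eq_norm, hsub]
    calc ‖(u - y).comp A‖ ≤ ‖u - y‖ * ‖A‖ := ContinuousLinearMap.opNorm_comp_le _ A
      _ ≤ ε' * ‖A‖ := by
          apply mul_le_mul_of_nonneg_right _ (norm_nonneg A)
          rw [← dist_eq_norm]; exact hduy
      _ = ‖A‖ * ε' := mul_comm _ _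
  have hdiam : diam ((adjMap A '' K) ∩ W) ≤ 2 * ‖A‖ * ε' := by
    refine diam_le_of_forall_dist_le (by positivity) ?_
    intro p hp q hq
    calc dist p q ≤ dist p z + dist z q := dist_triangle _ _ _
      _ ≤ ‖A‖ * ε' + ‖A‖ * ε' := by
          refine add_le_add (hdist p hp) ?_
          rw [dist_comm]; exact hdist q hq
      _ = 2 * ‖A‖ * ε' := by ring
  exact absurd hlt (not_lt.mpr (hdiam.trans hc))

lemma szlenkIter_adj (A : X →L[ℝ] Y) {K : Set (StrongDual ℝ Y)} (hK : IsCompact (wset K))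
    (hKb : IsBounded K) (hε' : 0 ≤ ε') (hc : 2 * ‖A‖ * ε' ≤ ε) :
    szlenkIter ε (adjMap A '' K) α ⊆ adjMap A '' szlenkIter ε' K α := by
  have hKim_b : IsBounded (adjMap A '' K) := isBounded_adjMap_image A hKb
  induction α using Ordinal.limitRecOn with
  | zero => rw [szlenkIter_zero, szlenkIter_zero]
  | add_one α ih =>
      rw [szlenkIter_succ, szlenkIter_succ]
      refine (szlenkDeriv_mono (hKim_b.subset (Set.image_mono szlenkIter_subset)) ih).trans ?_
      exact szlenkDeriv_adj A (wcompact_szlenkIter hK) (hKb.subset szlenkIter_subset) hε' hc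
  | limit α hα ih =>
      rw [szlenkIter_limit hα, szlenkIter_limit hα]
      intro z hz
      haveI : Nonempty {β : Ordinal // β < α} := ⟨⟨0, hα.pos⟩⟩
      set G : {β : Ordinal // β < α} → Set (WeakDual ℝ Y) :=
        fun i => wset (szlenkIter ε' K i.1) ∩ wadj A ⁻¹' {StrongDual.toWeakDual z} with hGdef
      have hGdir : Directed (· ⊇ ·) G := by
        intro i j
        refine ⟨⟨max i.1 j.1, max_lt i.2 j.2⟩, ?_, ?_⟩
        · exact Set.inter_subset_inter_left _ (szlenkIter_anti (le_max_left _ _))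
        · exact Set.inter_subset_inter_left _ (szlenkIter_anti (le_max_right _ _))
      have hGne : ∀ i, (G i).Nonempty := by
        intro i
        have := ih i.1 i.2 (Set.mem_iInter₂.mp hz i.1 i.2)
        obtain ⟨y, hy, hyz⟩ := this
        exact ⟨StrongDual.toWeakDual y, hy, show wadj A y = StrongDual.toWeakDual z from hyz⟩
      have hGc : ∀ i, IsCompact (G i) := fun i =>
        (wcompact_szlenkIter hK).inter_right
          (isClosed_singleton.preimage (continuous_wadj A))
      have hnon := IsCompact.nonempty_iInter_of_directed_nonempty_isCompact_isClosed
        G hGdir hGne hGc (fun i => (hGc i).isClosed)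
      obtain ⟨y, hy⟩ := hnon
      have hyiter : (y : StrongDual ℝ Y) ∈ ⋂ (β) (_ : β < α), szlenkIter ε' K β :=
        Set.mem_iInter₂.mpr fun β hβ => (Set.mem_iInter.mp hy ⟨β, hβ⟩).1
      have hyz : adjMap A y = z := (Set.mem_iInter.mp hy ⟨0, hα.pos⟩).2
      exact ⟨y, hyiter, hyz⟩
end Szlenk

namespace Szlenk
variable {X : Type*} [NormedAddCommGroup X] [NormedSpace ℝ X]

/-- Emptiness persists when the ordinal exponent increases. -/
lemma empty_up {η : ℝ} {K : Set (StrongDual ℝ X)} {ξ ξ' : Ordinal} (h : ξ ≤ ξ')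
    (he : szlenkIter η K ξ = ∅) : szlenkIter η K ξ' = ∅ :=
  Set.subset_empty_iff.mp ((szlenkIter_anti h).trans he.subset)

/-- The affine image of the unit ball under `y ↦ 0 + r • y` is the ball of radius `r`. -/
lemma affMap_ball {r : ℝ} (hr : 0 < r) :
    affMap r (0 : StrongDual ℝ X) '' closedBall 0 1 = closedBall (0 : StrongDual ℝ X) r := by
  ext w
  simp only [affMap, zero_add, Set.mem_image, mem_closedBall_zero_iff]
  constructor
  · rintro ⟨y, hy, rfl⟩
    rw [norm_smul, Real.norm_eq_abs, abs_of_pos hr]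
    calc r * ‖y‖ ≤ r * 1 := mul_le_mul_of_nonneg_left hy hr.le
      _ = r := mul_one r
  · intro hw
    refine ⟨r⁻¹ • w, ?_, ?_⟩
    · rw [norm_smul, Real.norm_eq_abs, abs_of_pos (inv_pos.mpr hr), inv_mul_le_iff₀ hr, mul_one]
      exact hw
    · rw [smul_smul, mul_inv_cancel₀ hr.ne', one_smul]
end Szlenk

open Szlenk in
/-- Let `β` be a nonzero ordinal of countable cofinality and `(β_n)` a superadditive
cofinal sequence for `ω^β` (indexed by the positive naturals).  If `T = B ∘ A` factors
through a Banach space `D` with `Sz(D) ≤ ω^{ω^β}`, then there is `n₀ ≥ 1` with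
`Sz_{1/2^n}(T) ≤ ω^{β_{n₀·n}}` for all `n ≥ 1`. -/
theorem szlenk_eps_bound_of_factorization
    {E F D : Type*} [NormedAddCommGroup E] [NormedSpace ℝ E] [CompleteSpace E]
    [NormedAddCommGroup F] [NormedSpace ℝ F] [CompleteSpace F]
    [NormedAddCommGroup D] [NormedSpace ℝ D] [CompleteSpace D]
    (β : Ordinal) (hβ : β ≠ 0) (hβcof : β.cof ≤ Cardinal.aleph0)
    (b : ℕ → Ordinal)
    (hblt : ∀ n : ℕ, 0 < n → b n < Ordinal.omega0 ^ β)
    (hbcof : ∀ γ : Ordinal, γ < Ordinal.omega0 ^ β → ∃ n : ℕ, 0 < n ∧ γ ≤ b n)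
    (hbadd : ∀ m n : ℕ, 0 < m → 0 < n → b m + b n ≤ b (m + n))
    (T : E →L[ℝ] F) (A : E →L[ℝ] D) (B : D →L[ℝ] F)
    (hD : SzSpaceLE D (Ordinal.omega0 ^ (Ordinal.omega0 ^ β)))
    (hT : T = B.comp A) :
    ∃ n₀ : ℕ, 0 < n₀ ∧ ∀ n : ℕ, 0 < n →
      szlenkIter (1 / 2 ^ n) (adjImage T (closedBall (0 : StrongDual ℝ F) 1))
        (Ordinal.omega0 ^ b (n₀ * n)) = ∅ := by
  classical
  set BD : Set (StrongDual ℝ D) := closedBall 0 1 with hBDdef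
  have hBDb : Bornology.IsBounded BD := isBounded_closedBall
  have hBDc : IsCompact (wset BD) := WeakDual.isCompact_closedBall (0 : StrongDual ℝ D) 1
  have hωβ0 : (Ordinal.omega0 ^ β) ≠ 0 := (Ordinal.opow_ne_zero β Ordinal.omega0_ne_zero)
  have hlimβ : Order.IsSuccLimit (Ordinal.omega0 ^ β) :=
    Ordinal.isSuccLimit_opow_left Ordinal.isSuccLimit_omega0 hβ
  have hlim2 : Order.IsSuccLimit (Ordinal.omega0 ^ (Ordinal.omega0 ^ β)) :=
    Ordinal.isSuccLimit_opow_left Ordinal.isSuccLimit_omega0 hωβ0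
  have step3 : ∀ η : ℝ, 0 < η → ∃ k : ℕ, 0 < k ∧
      szlenkIter η BD (Ordinal.omega0 ^ b k) = ∅ := by
    intro η hη
    obtain ⟨γ, hγlt, hγe⟩ := exists_empty_of_limit_empty hBDc hlim2 (hD η hη)
    obtain ⟨δ', hδ'lt, hγδ'⟩ := (Ordinal.lt_opow_of_isSuccLimit Ordinal.omega0_ne_zero hlimβ).mp hγlt
    obtain ⟨k, hk, hδk⟩ := hbcof δ' hδ'lt
    refine ⟨k, hk, empty_up ?_ hγe⟩
    exact hγδ'.le.trans (Ordinal.opow_le_opow_right Ordinal.omega0_pos hδk)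
  set a : ℝ := ‖A‖ + 1 with hadef
  set r : ℝ := ‖B‖ + 1 with hrdef
  have ha : 0 < a := by positivity
  have hr : 0 < r := by positivity
  set c : ℝ := 1 / (2 * a * r) with hcdef
  have hc : 0 < c := by positivity
  obtain ⟨k₁, hk₁, h₁⟩ := step3 (1/2) (by norm_num)
  obtain ⟨k₂, hk₂, h₂⟩ := step3 c hc
  obtain ⟨k₀, hk₀, hbk₀⟩ := hbcof (max (b k₁) (b k₂))
    (max_lt (hblt k₁ hk₁) (hblt k₂ hk₂))
  have hhalf : szlenkIter (1/2) BD (Ordinal.omega0 ^ b k₀) = ∅ :=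
    empty_up (Ordinal.opow_le_opow_right Ordinal.omega0_pos
      ((le_max_left _ _).trans hbk₀)) h₁
  have hcb : szlenkIter c BD (Ordinal.omega0 ^ b k₀) = ∅ :=
    empty_up (Ordinal.opow_le_opow_right Ordinal.omega0_pos
      ((le_max_right _ _).trans hbk₀)) h₂
  -- monotonicity of b
  have hbmono : ∀ m m' : ℕ, 0 < m → m ≤ m' → b m ≤ b m' := by
    intro m m' hm hmm'
    rcases eq_or_lt_of_le hmm' with rfl | h
    · exact le_rfl
    · calc b m ≤ b m + b (m' - m) := le_self_add
        _ ≤ b (m + (m' - m)) := hbadd m (m' - m) hm (by omega)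
        _ = b m' := by congr 1; omega
  -- superadditivity iterated
  have hsup : ∀ n : ℕ, 0 < n → b k₀ * (n : Ordinal) ≤ b (k₀ * n) := by
    intro n hn
    induction n with
    | zero => omega
    | succ n ih =>
        rcases Nat.eq_zero_or_pos n with rfl | hn'
        · simp
        · rw [Ordinal.natCast_succ, Ordinal.mul_succ]
          calc b k₀ * (n : Ordinal) + b k₀ ≤ b (k₀ * n) + b k₀ :=
                add_le_add_left (ih hn') _
            _ ≤ b (k₀ * n + k₀) := hbadd _ _ (by positivity) hk₀
            _ = b (k₀ * (n + 1)) := by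
                have hk : k₀ * n + k₀ = k₀ * (n + 1) := by ring
                rw [hk]
  -- key induction : iterated submultiplicativity
  have hPn : ∀ n : ℕ, 0 < n →
      szlenkIter (c * (1/2)^n) BD (Ordinal.omega0 ^ (b k₀ * ((n:Ordinal) + 1))) = ∅ := by
    intro n hn
    induction n with
    | zero => omega
    | succ n ih =>
        rcases Nat.eq_zero_or_pos n with rfl | hn'
        · have hQ := szlenkIter_submul hcb (by norm_num : (0:ℝ) < 1/2) hhalf
          have he2 : (Ordinal.omega0 ^ b k₀) * (Ordinal.omega0 ^ b k₀)
              = Ordinal.omega0 ^ (b k₀ * (((0+1:ℕ):Ordinal) + 1)) := by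
            rw [← Ordinal.opow_add]
            congr 1
            have h1 : (((0+1:ℕ):Ordinal) + 1) = 1 + 1 := by norm_num
            rw [h1, mul_add, mul_one]
          rw [he2] at hQ
          have he1 : c * (1/2)^(0+1) = c * (1/2) := by norm_num
          rw [he1]
          exact hQ
        · have hQ := szlenkIter_submul (ih hn') (by norm_num : (0:ℝ) < 1/2) hhalf
          have he : (Ordinal.omega0 ^ (b k₀ * ((n:Ordinal) + 1))) * (Ordinal.omega0 ^ b k₀)
              = Ordinal.omega0 ^ (b k₀ * (((n+1:ℕ):Ordinal) + 1)) := by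
            rw [← Ordinal.opow_add]
            congr 1
            have h2 : (((n+1:ℕ):Ordinal) + 1) = Order.succ ((n:Ordinal) + 1) := by
              rw [Nat.cast_succ, ← Ordinal.add_one_eq_succ]
            rw [h2, Ordinal.mul_succ]
          rw [he] at hQ
          have hee : c * (1/2)^n * (1/2) = c * (1/2)^(n+1) := by ring
          rw [hee] at hQ
          exact hQ
  refine ⟨2 * k₀, by positivity, fun n hn => ?_⟩
  -- exponent bound
  have hexp : b k₀ * ((n:Ordinal) + 1) ≤ b (2 * k₀ * n) := by
    have h1 : b k₀ * ((n:Ordinal) + 1) = b k₀ * (((n+1:ℕ)):Ordinal) := by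
      rw [Nat.cast_succ]
    rw [h1]
    refine (hsup (n+1) (by omega)).trans (hbmono _ _ (by positivity) ?_)
    calc k₀ * (n+1) ≤ k₀ * (2*n) := Nat.mul_le_mul_left k₀ (by omega)
      _ = 2 * k₀ * n := by ring
  have h2 : szlenkIter (c * (1/2)^n) BD (Ordinal.omega0 ^ b (2 * k₀ * n)) = ∅ :=
    empty_up (Ordinal.opow_le_opow_right Ordinal.omega0_pos hexp) (hPn n hn)
  -- scale to radius r
  have hscale := szlenkIter_affMap (ε := c * (1/2)^n)
    (α := Ordinal.omega0 ^ b (2 * k₀ * n)) r (0 : StrongDual ℝ D) hr (K := BD)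
  rw [affMap_ball hr, h2, Set.image_empty] at hscale
  set K₀ : Set (StrongDual ℝ D) := closedBall 0 r with hK₀def
  have hK₀c : IsCompact (wset K₀) := WeakDual.isCompact_closedBall (0 : StrongDual ℝ D) r
  have hK₀b : Bornology.IsBounded K₀ := isBounded_closedBall
  set εD : ℝ := r * (c * (1/2)^n) with hεDdef
  have hεD : 0 ≤ εD := by positivity
  have hcineq : 2 * ‖A‖ * εD ≤ 1 / 2^n := by
    have hAa : ‖A‖ ≤ a := by rw [hadef]; linarith
    have heq : 2 * ‖A‖ * εD = (‖A‖ / a) * (1/2)^n := by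
      rw [hεDdef, hcdef]
      field_simp
    rw [heq, ← one_div_pow]
    exact mul_le_of_le_one_left (by positivity) ((div_le_one ha).mpr hAa)
  have h4 := szlenkIter_adj (ε := 1/2^n) (α := Ordinal.omega0 ^ b (2 * k₀ * n))
    A hK₀c hK₀b hεD hcineq
  rw [hscale, Set.image_empty] at h4
  -- T* ball ⊆ A* K₀
  have hsubset : adjImage T (closedBall (0 : StrongDual ℝ F) 1) ⊆ adjMap A '' K₀ := by
    rintro _ ⟨g, hg, rfl⟩
    refine ⟨g.comp B, ?_, ?_⟩
    · rw [mem_closedBall_zero_iff]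
      calc ‖g.comp B‖ ≤ ‖g‖ * ‖B‖ := ContinuousLinearMap.opNorm_comp_le g B
        _ ≤ 1 * ‖B‖ := mul_le_mul_of_nonneg_right (mem_closedBall_zero_iff.mp hg) (norm_nonneg B)
        _ ≤ r := by rw [one_mul, hrdef]; linarith
    · show (g.comp B).comp A = g.comp T
      rw [hT]
      ext x
      rfl
  refine Set.subset_empty_iff.mp (le_trans ?_ h4)
  exact szlenkIter_mono (isBounded_adjMap_image A hK₀b) hsubset
end
end

section
/- Let E_1, …, E_n be Banach spaces and K_1 ⊆ E_1*, …, K_n ⊆ E_n* nonempty weak-*-compact sets. Let 1 ≤ q < ∞, let a_1, …, a_n ≥ 0 be reals with Σ_{i=1}^n a_i^q ≤ 1, let p be predual to q (p = 0 if q = 1, p = q/(q−1) if 1 < q < ∞), and consider ∏_{i=1}^n a_i K_i as a subset of ((⊕_{i=1}^n E_i)_p)* identified with (⊕_{i=1}^n E_i*)_q. Then for all ε > 0 and all ordinals α: s_ε^{ω^α}(∏_{i=1}^n a_i K_i) ⊆ ⋃_{j=1}^n ( a_1 K_1 × … × a_{j−1} K_{j−1} × a_j s_ε^{ω^α}(K_j)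 × a_{j+1} K_{j+1} × … × a_n K_n ). -/
open NormedSpace Metric
open scoped Ordinal Pointwise ENNReal NNReal

noncomputable section

/-- The set `∏ a_i K_i` inside the dual of `(⊕ E_i)_p` (identified with `(⊕ E_i*)_q`):
the functionals `x ↦ ∑ i, a_i · g i (x i)` with `g i ∈ K i`. -/
def weightedProdDualSet {n : ℕ} (p : ℝ≥0∞) [Fact (1 ≤ p)] (E : Fin n → Type*) [∀ i, NormedAddCommGroup (E i)]
    [∀ i, NormedSpace ℝ (E i)] (a : Fin n → ℝ) (K : ∀ i, Set (StrongDual ℝ (E i))) :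
    Set (StrongDual ℝ (PiLp p E)) :=
  {f | ∃ g : ∀ i, StrongDual ℝ (E i), (∀ i, g i ∈ K i) ∧
    ∀ x : PiLp p E, f x = ∑ i, a i * g i (x i)}

namespace SzlenkAux

open Set Bornology Function

variable {X : Type*} [NormedAddCommGroup X] [NormedSpace ℝ X] {ε : ℝ} {K A B : Set (StrongDual ℝ X)}

theorem e_bij : Function.Bijective (⇑(StrongDual.toWeakDual) : StrongDual ℝ X → WeakDual ℝ X) :=
  LinearEquiv.bijective _

theorem mem_e_image {x : StrongDual ℝ X} {S : Set (StrongDual ℝ X)} :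
    (StrongDual.toWeakDual x : WeakDual ℝ X) ∈ StrongDual.toWeakDual '' S ↔ x ∈ S :=
  (e_bij.injective.mem_set_image)

theorem wsOpen_univ : IsWeakStarOpen (Set.univ : Set (StrongDual ℝ X)) := by
  unfold IsWeakStarOpen
  rw [Set.image_univ_of_surjective e_bij.surjective]
  exact isOpen_univ

theorem wsOpen_inter {V W : Set (StrongDual ℝ X)} (hV : IsWeakStarOpen V) (hW : IsWeakStarOpen W) :
    IsWeakStarOpen (V ∩ W) := by
  unfold IsWeakStarOpen
  rw [Set.image_inter e_bij.injective]
  exact hV.inter hW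

theorem wsOpen_biInter_finset {ι : Type*} (s : Finset ι) {W : ι → Set (StrongDual ℝ X)}
    (h : ∀ c ∈ s, IsWeakStarOpen (W c)) : IsWeakStarOpen (⋂ c ∈ s, W c) := by
  unfold IsWeakStarOpen
  have : (StrongDual.toWeakDual '' (⋂ c ∈ s, W c) : Set (WeakDual ℝ X)) =
      ⋂ c ∈ s, StrongDual.toWeakDual '' (W c) := Set.image_iInter₂ e_bij _
  rw [this]
  exact Set.Finite.isOpen_biInter s.finite_toSet h

theorem wsOpen_preimage {U : Set (WeakDual ℝ X)} (hU : IsOpen U) :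
    IsWeakStarOpen ((StrongDual.toWeakDual : StrongDual ℝ X ≃ₗ[ℝ] WeakDual ℝ X) ⁻¹' U) := by
  unfold IsWeakStarOpen
  rw [Set.image_preimage_eq U e_bij.surjective]
  exact hU

/-- basic equations -/
@[simp] theorem szlenkIter_zero : szlenkIter ε K 0 = K := Ordinal.limitRecOn_zero _ _ _

theorem szlenkIter_succ (α : Ordinal) :
    szlenkIter ε K (α + 1) = szlenkDeriv ε (szlenkIter ε K α) := by
  rw [szlenkIter, Ordinal.limitRecOn_add_one]; rfl

theorem szlenkIter_limit {α : Ordinal} (h : Order.IsSuccLimit α) :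
    szlenkIter ε K α = ⋂ (β : Ordinal) (_ : β < α), szlenkIter ε K β := by
  rw [szlenkIter, Ordinal.limitRecOn_limit _ _ _ _ h]; rfl

theorem szlenkIter_one : szlenkIter ε K 1 = szlenkDeriv ε K := by
  rw [← zero_add (1 : Ordinal), szlenkIter_succ, szlenkIter_zero]

theorem szlenkDeriv_subset : szlenkDeriv ε K ⊆ K := fun _ hx => hx.1

theorem szlenkIter_subset : ∀ α : Ordinal, szlenkIter ε K α ⊆ K := by
  intro α
  induction α using Ordinal.limitRecOn with
  | zero => rw [szlenkIter_zero]
  | add_one α ih =>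
      rw [szlenkIter_succ]
      exact szlenkDeriv_subset.trans ih
  | limit α hα ih =>
      rw [szlenkIter_limit hα]
      intro x hx
      have := Set.mem_iInter₂.1 hx 0 hα.pos
      rwa [szlenkIter_zero] at this

theorem szlenkIter_antitone : ∀ {β γ : Ordinal}, β ≤ γ → szlenkIter ε K γ ⊆ szlenkIter ε K β := by
  intro β γ
  induction γ using Ordinal.limitRecOn with
  | zero => intro h; rw [nonpos_iff_eq_zero.1 h]
  | add_one γ ih =>
      intro h
      rcases eq_or_lt_of_le h with rfl | h'
      · rfl
      · rw [szlenkIter_succ]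
        exact szlenkDeriv_subset.trans (ih (Order.lt_succ_iff.1 (by rwa [← Ordinal.add_one_eq_succ])))
  | limit γ hγ _ =>
      intro h
      rcases eq_or_lt_of_le h with rfl | h'
      · rfl
      · rw [szlenkIter_limit hγ]
        exact Set.iInter₂_subset β h'

theorem szlenkIter_add (β : Ordinal) :
    ∀ γ : Ordinal, szlenkIter ε K (β + γ) = szlenkIter ε (szlenkIter ε K β) γ := by
  intro γ
  induction γ using Ordinal.limitRecOn with
  | zero => rw [add_zero, szlenkIter_zero]
  | add_one γ ih =>
      rw [← add_assoc,
        szlenkIter_succ, szlenkIter_succ, ih]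
  | limit γ hγ ih =>
      have hβγ : Order.IsSuccLimit (β + γ) := Ordinal.isSuccLimit_add β hγ
      rw [szlenkIter_limit hβγ, szlenkIter_limit hγ]
      apply Set.Subset.antisymm
      · intro x hx
        refine Set.mem_iInter₂.2 fun ζ hζ => ?_
        rw [← ih ζ hζ]
        exact Set.mem_iInter₂.1 hx _ ((add_lt_add_iff_left β).2 hζ)
      · intro x hx
        refine Set.mem_iInter₂.2 fun δ hδ => ?_
        rcases le_total δ β with hle | hle
        · have h0 : x ∈ szlenkIter ε K (β + 0) := by
            rw [ih 0 hγ.pos] at *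
            exact Set.mem_iInter₂.1 hx 0 hγ.pos
          rw [add_zero] at h0
          exact szlenkIter_antitone hle h0
        · have hδβ : β + (δ - β) = δ := Ordinal.add_sub_cancel_of_le hle
          have hlt : δ - β < γ := by
            rw [← add_lt_add_iff_left β, hδβ]
            exact hδ
          have := Set.mem_iInter₂.1 hx _ hlt
          rw [← ih _ hlt, hδβ] at this
          exact this

theorem szlenkDeriv_mono (h : A ⊆ B) (hB : IsBounded B) : szlenkDeriv ε A ⊆ szlenkDeriv ε B := by
  rintro x ⟨hxA, hx⟩
  refine ⟨h hxA, fun V hV hxV => lt_of_lt_of_le (hx V hV hxV) ?_⟩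
  exact diam_mono (Set.inter_subset_inter_left V h) (hB.subset Set.inter_subset_left)

theorem szlenkIter_mono (h : A ⊆ B) (hB : IsBounded B) :
    ∀ γ : Ordinal, szlenkIter ε A γ ⊆ szlenkIter ε B γ := by
  intro γ
  induction γ using Ordinal.limitRecOn with
  | zero => rw [szlenkIter_zero, szlenkIter_zero]; exact h
  | add_one γ ih =>
      rw [szlenkIter_succ, szlenkIter_succ]
      exact szlenkDeriv_mono ih (hB.subset (szlenkIter_subset γ))
  | limit γ hγ ih =>
      rw [szlenkIter_limit hγ, szlenkIter_limit hγ]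
      exact fun x hx => Set.mem_iInter₂.2 fun β hβ => ih β hβ (Set.mem_iInter₂.1 hx β hβ)

theorem szlenkDeriv_inter_open {W : Set (StrongDual ℝ X)} (hW : IsWeakStarOpen W) :
    szlenkDeriv ε A ∩ W ⊆ szlenkDeriv ε (A ∩ W) := by
  rintro x ⟨⟨hxA, hx⟩, hxW⟩
  refine ⟨⟨hxA, hxW⟩, fun V hV hxV => ?_⟩
  have := hx (W ∩ V) (wsOpen_inter hW hV) ⟨hxW, hxV⟩
  rwa [← Set.inter_assoc] at this

theorem szlenkIter_inter_open {W : Set (StrongDual ℝ X)} (hW : IsWeakStarOpen W) (hA : IsBounded A) :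
    ∀ γ : Ordinal, szlenkIter ε A γ ∩ W ⊆ szlenkIter ε (A ∩ W) γ := by
  intro γ
  induction γ using Ordinal.limitRecOn with
  | zero => rw [szlenkIter_zero, szlenkIter_zero]
  | add_one γ ih =>
      rw [szlenkIter_succ, szlenkIter_succ]
      refine (szlenkDeriv_inter_open hW).trans (szlenkDeriv_mono ih ?_)
      exact hA.subset ((szlenkIter_subset γ).trans Set.inter_subset_left)
  | limit γ hγ ih =>
      rw [szlenkIter_limit hγ, szlenkIter_limit hγ]
      rintro x ⟨hx, hxW⟩
      exact Set.mem_iInter₂.2 fun β hβ => ih β hβ ⟨Set.mem_iInter₂.1 hx β hβ, hxW⟩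

theorem szlenkDeriv_eq_diff :
    szlenkDeriv ε K = K \ ⋃₀ {V | IsWeakStarOpen V ∧ Metric.diam (K ∩ V) ≤ ε} := by
  ext x
  constructor
  · rintro ⟨hxK, hx⟩
    refine ⟨hxK, ?_⟩
    rintro ⟨V, ⟨hV1, hV2⟩, hxV⟩
    exact absurd (hx V hV1 hxV) (not_lt.2 hV2)
  · rintro ⟨hxK, hx⟩
    refine ⟨hxK, fun V hV hxV => ?_⟩
    by_contra hc
    exact hx ⟨V, ⟨hV, not_lt.1 hc⟩, hxV⟩

theorem szlenkDeriv_isClosed (hK : IsClosed (StrongDual.toWeakDual '' K : Set (WeakDual ℝ X))) :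
    IsClosed (StrongDual.toWeakDual '' szlenkDeriv ε K : Set (WeakDual ℝ X)) := by
  rw [szlenkDeriv_eq_diff (ε := ε) (K := K), Set.image_diff e_bij.injective]
  apply hK.sdiff
  rw [Set.image_sUnion]
  apply isOpen_sUnion
  rintro t ⟨V, ⟨hV, _⟩, rfl⟩
  exact hV

theorem szlenkIter_isClosed (hK : IsClosed (StrongDual.toWeakDual '' K : Set (WeakDual ℝ X))) :
    ∀ γ : Ordinal, IsClosed (StrongDual.toWeakDual '' szlenkIter ε K γ : Set (WeakDual ℝ X)) := by
  intro γ
  induction γ using Ordinal.limitRecOn with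
  | zero => rw [szlenkIter_zero]; exact hK
  | add_one γ ih =>
      rw [szlenkIter_succ]
      exact szlenkDeriv_isClosed ih
  | limit γ hγ ih =>
      rw [szlenkIter_limit hγ]
      have : (StrongDual.toWeakDual '' ⋂ (β : Ordinal) (_ : β < γ), szlenkIter ε K β :
          Set (WeakDual ℝ X)) = ⋂ (β : Ordinal) (_ : β < γ), StrongDual.toWeakDual '' szlenkIter ε K β :=
        Set.image_iInter₂ e_bij _
      rw [this]
      exact isClosed_iInter fun β => isClosed_iInter fun hβ => ih β hβ

theorem IsWeakStarCompact.szlenkIter_cpt (hK : IsWeakStarCompact K) (γ : Ordinal) :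
    IsWeakStarCompact (szlenkIter ε K γ) :=
  hK.of_isClosed_subset (szlenkIter_isClosed hK.isClosed γ)
    (Set.image_mono (szlenkIter_subset γ))

theorem IsWeakStarCompact.isBounded [CompleteSpace X] (hK : IsWeakStarCompact K) :
    IsBounded K := by
  rw [isBounded_iff_forall_norm_le]
  have hpt : ∀ x : X, ∃ C, ∀ f : K, ‖(f : StrongDual ℝ X) x‖ ≤ C := by
    intro x
    have hc : IsCompact ((fun φ : WeakDual ℝ X => φ x) '' (StrongDual.toWeakDual '' K)) :=
      hK.image (WeakDual.eval_continuous x)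
    obtain ⟨C, hC⟩ := (isBounded_iff_forall_norm_le).1 hc.isBounded
    exact ⟨C, fun f => hC _ ⟨StrongDual.toWeakDual (f : StrongDual ℝ X), ⟨f, f.2, rfl⟩, rfl⟩⟩
  obtain ⟨C', hC'⟩ := banach_steinhaus (g := fun f : K => (f : StrongDual ℝ X)) hpt
  exact ⟨C', fun f hf => hC' ⟨f, hf⟩⟩

theorem exists_wsOpen_disjoint {Q : Set (StrongDual ℝ X)} (hQ : IsWeakStarCompact Q)
    {f : StrongDual ℝ X} (hf : f ∉ Q) :
    ∃ W : Set (StrongDual ℝ X), IsWeakStarOpen W ∧ f ∈ W ∧ Q ∩ W = ∅ := by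
  refine ⟨(StrongDual.toWeakDual : StrongDual ℝ X ≃ₗ[ℝ] WeakDual ℝ X) ⁻¹' (StrongDual.toWeakDual '' Q)ᶜ,
    wsOpen_preimage hQ.isClosed.isOpen_compl, ?_, ?_⟩
  · exact fun h => hf (mem_e_image.1 (by simpa using h))
  · ext x
    simp only [Set.mem_inter_iff, Set.mem_preimage, Set.mem_compl_iff, Set.mem_empty_iff_false,
      iff_false, not_and]
    exact fun hx h => h (Set.mem_image_of_mem _ hx)

theorem szlenkDeriv_subsingleton (hε : 0 < ε) (hS : K.Subsingleton) : szlenkDeriv ε K = ∅ := by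
  ext x
  simp only [Set.mem_empty_iff_false, iff_false]
  rintro ⟨hxK, hx⟩
  have := hx Set.univ wsOpen_univ (Set.mem_univ x)
  rw [Set.inter_univ] at this
  exact absurd this (not_lt.2 (by rw [Metric.diam_subsingleton hS]; exact hε.le))

end SzlenkAux

namespace SzlenkAux

open Set Bornology Function

variable {n : ℕ} {p : ℝ≥0∞} [Fact (1 ≤ p)] {E : Fin n → Type*} [∀ i, NormedAddCommGroup (E i)]
    [∀ i, NormedSpace ℝ (E i)] {q : ℝ} {a : Fin n → ℝ} {ε : ℝ}

/-- The coordinate inclusion as a continuous linear map. -/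
def ICLM (p : ℝ≥0∞) [Fact (1 ≤ p)] {n : ℕ} (E : Fin n → Type*) [∀ i, NormedAddCommGroup (E i)]
    [∀ i, NormedSpace ℝ (E i)] (i : Fin n) : E i →L[ℝ] PiLp p E :=
  ((PiLp.continuousLinearEquiv p ℝ E).symm : (∀ k, E k) →L[ℝ] PiLp p E).comp
    ⟨LinearMap.single ℝ E i, continuous_single i⟩

theorem sum_single_eq (g : ∀ i, StrongDual ℝ (E i)) (j : Fin n) (x : E j) :
    ∑ i, a i * g i ((ICLM p E j x) i) = a j * g j x := by
  rw [Finset.sum_eq_single j]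
  · have : (ICLM p E j x) j = x := Pi.single_eq_same j x
    rw [this]
  · intro i _ hij
    have : (ICLM p E j x) i = 0 := Pi.single_eq_of_ne hij x
    rw [this, map_zero, mul_zero]
  · intro h
    exact absurd (Finset.mem_univ j) h

theorem coord_formula {f : StrongDual ℝ (PiLp p E)} {g : ∀ i, StrongDual ℝ (E i)}
    (hf : ∀ x : PiLp p E, f x = ∑ i, a i * g i (x i)) (j : Fin n) (x : E j) :
    f (ICLM p E j x) = a j * g j x := by
  rw [hf]; exact sum_single_eq g j x

theorem coord_unique {f : StrongDual ℝ (PiLp p E)} {g g' : ∀ i, StrongDual ℝ (E i)}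
    (hf : ∀ x : PiLp p E, f x = ∑ i, a i * g i (x i))
    (hf' : ∀ x : PiLp p E, f x = ∑ i, a i * g' i (x i)) {j : Fin n} (hj : a j ≠ 0) :
    g j = g' j :=
  ContinuousLinearMap.ext fun x =>
    mul_left_cancel₀ hj (by rw [← coord_formula hf j x, ← coord_formula hf' j x])

theorem comp_T_eq {f : StrongDual ℝ (PiLp p E)} {g : ∀ i, StrongDual ℝ (E i)}
    (hf : ∀ x : PiLp p E, f x = ∑ i, a i * g i (x i)) {j : Fin n} (hj : a j ≠ 0) :
    f.comp ((a j)⁻¹ • ICLM p E j) = g j := by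
  ext x
  have h1 : f.comp ((a j)⁻¹ • ICLM p E j) x = (a j)⁻¹ * f (ICLM p E j x) := by
    rw [ContinuousLinearMap.comp_apply, ContinuousLinearMap.smul_apply, map_smul, smul_eq_mul]
  rw [h1, coord_formula hf j x, inv_mul_cancel_left₀ hj]

theorem holder_le (hq : 1 ≤ q)
    (hpq : (q = 1 ∧ p = ⊤) ∨ (1 < q ∧ p = ENNReal.ofReal (q / (q - 1))))
    (ha : ∀ i, 0 ≤ a i) (hasum : (∑ i, a i ^ q) ≤ 1) (x : PiLp p E) :
    ∑ i, a i * ‖x i‖ ≤ ‖x‖ := by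
  rcases hpq with ⟨hq1, hp⟩ | ⟨hq1, hp⟩
  · subst hp
    have h1 : ∀ i, a i * ‖x i‖ ≤ a i * ‖x‖ := by
      intro i
      apply mul_le_mul_of_nonneg_left _ (ha i)
      rw [PiLp.norm_eq_ciSup]
      exact le_ciSup (f := fun i => ‖x i‖) (Set.Finite.bddAbove (Set.finite_range _)) i
    calc ∑ i, a i * ‖x i‖ ≤ ∑ i, a i * ‖x‖ := Finset.sum_le_sum fun i _ => h1 i
      _ = (∑ i, a i) * ‖x‖ := by rw [← Finset.sum_mul]
      _ ≤ 1 * ‖x‖ := by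
          apply mul_le_mul_of_nonneg_right _ (norm_nonneg x)
          calc ∑ i, a i = ∑ i, a i ^ q := by
                refine Finset.sum_congr rfl fun i _ => ?_
                rw [hq1, Real.rpow_one]
            _ ≤ 1 := hasum
      _ = ‖x‖ := one_mul _
  · have hq0 : 0 < q := lt_trans one_pos hq1
    have hp' : 0 < q / (q - 1) := div_pos hq0 (by linarith)
    have hcj : q.HolderConjugate (q / (q - 1)) := Real.HolderConjugate.conjExponent hq1
    have hptoReal : p.toReal = q / (q - 1) := by rw [hp, ENNReal.toReal_ofReal hp'.le]
    have hnorm : ‖x‖ = (∑ i, ‖x i‖ ^ (q / (q - 1))) ^ (1 / (q / (q - 1))) := by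
      rw [PiLp.norm_eq_sum (by rw [hptoReal]; exact hp') x, hptoReal]
    calc ∑ i, a i * ‖x i‖
        ≤ (∑ i, a i ^ q) ^ (1 / q) * (∑ i, ‖x i‖ ^ (q / (q - 1))) ^ (1 / (q / (q - 1))) :=
          Real.inner_le_Lp_mul_Lq_of_nonneg Finset.univ hcj (fun i _ => ha i)
            (fun i _ => norm_nonneg _)
      _ ≤ 1 * ‖x‖ := by
          rw [hnorm]
          apply mul_le_mul_of_nonneg_right _ (Real.rpow_nonneg
            (Finset.sum_nonneg fun i _ => Real.rpow_nonneg (norm_nonneg _) _) _)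
          exact Real.rpow_le_one (Finset.sum_nonneg fun i _ => Real.rpow_nonneg (ha i) _)
            hasum (by positivity)
      _ = ‖x‖ := one_mul _

theorem WP_mono {A B : ∀ i, Set (StrongDual ℝ (E i))} (h : ∀ i, A i ⊆ B i) :
    weightedProdDualSet p E a A ⊆ weightedProdDualSet p E a B := by
  rintro f ⟨g, hg, hfg⟩
  exact ⟨g, fun i => h i (hg i), hfg⟩

theorem WP_isWeakStarCompact {A : ∀ i, Set (StrongDual ℝ (E i))}
    (hA : ∀ i, IsWeakStarCompact (A i)) :
    IsWeakStarCompact (weightedProdDualSet p E a A) := by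
  classical
  let prj : ∀ i, PiLp p E →L[ℝ] E i := fun i =>
    (ContinuousLinearMap.proj i).comp
      ((PiLp.continuousLinearEquiv p ℝ E) : PiLp p E →L[ℝ] ∀ k, E k)
  let T : (∀ i, StrongDual ℝ (E i)) → StrongDual ℝ (PiLp p E) := fun g => ∑ i, a i • ((g i).comp (prj i))
  have hT : ∀ g (x : PiLp p E), T g x = ∑ i, a i * g i (x i) := by
    intro g x
    simp only [T, ContinuousLinearMap.sum_apply, ContinuousLinearMap.smul_apply,
      ContinuousLinearMap.comp_apply, smul_eq_mul]
    rfl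
  let Φ : (∀ i, WeakDual ℝ (E i)) → WeakDual ℝ (PiLp p E) := fun gw =>
    StrongDual.toWeakDual (T (fun i => WeakDual.toStrongDual (gw i)))
  have hΦ : Continuous Φ := by
    apply WeakDual.continuous_of_continuous_eval
    intro y
    have : (fun gw : ∀ i, WeakDual ℝ (E i) => Φ gw y) =
        fun gw : ∀ i, WeakDual ℝ (E i) => ∑ i, a i * (gw i) (y i) := by
      funext gw
      exact hT _ y
    rw [this]
    exact continuous_finset_sum _ fun i _ =>
      continuous_const.mul ((WeakDual.eval_continuous (y i)).comp (continuous_apply i))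
  have himg : (StrongDual.toWeakDual '' weightedProdDualSet p E a A : Set (WeakDual ℝ (PiLp p E))) =
      Φ '' (Set.pi Set.univ fun i => (StrongDual.toWeakDual '' A i : Set (WeakDual ℝ (E i)))) := by
    ext φ
    constructor
    · rintro ⟨f, ⟨g, hg, hfg⟩, rfl⟩
      refine ⟨fun i => StrongDual.toWeakDual (g i), fun i _ => Set.mem_image_of_mem _ (hg i), ?_⟩
      have : T g = f := ContinuousLinearMap.ext fun x => by rw [hT g x, hfg x]
      simp only [Φ]
      rw [← this]
      rfl
    · rintro ⟨gw, hgw, rfl⟩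
      refine ⟨T (fun i => WeakDual.toStrongDual (gw i)), ⟨fun i => WeakDual.toStrongDual (gw i),
        fun i => ?_, fun x => hT _ x⟩, rfl⟩
      obtain ⟨y, hy, hyeq⟩ := hgw i (Set.mem_univ i)
      have : y = WeakDual.toStrongDual (gw i) := by rw [← hyeq]; rfl
      show WeakDual.toStrongDual (gw i) ∈ A i
      rw [← this]
      exact hy
  unfold IsWeakStarCompact
  rw [himg]
  exact (isCompact_univ_pi fun i => hA i).image hΦ

end SzlenkAux

namespace SzlenkAux

open Set Bornology Function

section Generic

variable {X Y : Type*} [NormedAddCommGroup X] [NormedSpace ℝ X]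
    [NormedAddCommGroup Y] [NormedSpace ℝ Y]

theorem wsOpen_comp_preimage (T : X →L[ℝ] Y) {V : Set (StrongDual ℝ X)}
    (hV : IsWeakStarOpen V) : IsWeakStarOpen {f : StrongDual ℝ Y | f.comp T ∈ V} := by
  let A : WeakDual ℝ Y → WeakDual ℝ X := fun φ =>
    StrongDual.toWeakDual ((WeakDual.toStrongDual φ).comp T)
  have hA : Continuous A := by
    apply WeakDual.continuous_of_continuous_eval
    intro x
    exact WeakDual.eval_continuous (T x)
  have himg : (StrongDual.toWeakDual '' {f : StrongDual ℝ Y | f.comp T ∈ V} : Set (WeakDual ℝ Y)) =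
      A ⁻¹' (StrongDual.toWeakDual '' V) := by
    ext φ
    constructor
    · rintro ⟨f, hf, rfl⟩
      exact Set.mem_image_of_mem _ hf
    · intro hφ
      have hφ' : StrongDual.toWeakDual ((WeakDual.toStrongDual φ).comp T) ∈
          (StrongDual.toWeakDual '' V : Set (WeakDual ℝ X)) := hφ
      have hx : (WeakDual.toStrongDual φ).comp T ∈ V := mem_e_image.1 hφ'
      exact ⟨WeakDual.toStrongDual φ, hx, rfl⟩
  unfold IsWeakStarOpen
  rw [himg]
  exact hV.preimage hA

end Generic

variable {n : ℕ} {p : ℝ≥0∞} [Fact (1 ≤ p)] {E : Fin n → Type*} [∀ i, NormedAddCommGroup (E i)]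
    [∀ i, NormedSpace ℝ (E i)] {q : ℝ} {a : Fin n → ℝ} {ε : ℝ}

instance piLpCompleteSpace [∀ i, CompleteSpace (E i)] : CompleteSpace (PiLp p E) :=
  inferInstance

theorem WP_subsingleton (hn : n = 0) {K : ∀ i, Set (StrongDual ℝ (E i))} :
    (weightedProdDualSet p E a K).Subsingleton := by
  have hempty : IsEmpty (Fin n) := by rw [hn]; infer_instance
  rintro f ⟨g, _, hfg⟩ f' ⟨g', _, hfg'⟩
  apply ContinuousLinearMap.ext fun x => ?_
  rw [hfg x, hfg' x, Finset.univ_eq_empty, Finset.sum_empty, Finset.sum_empty]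

theorem szlenkIter_WP_empty (hε : 0 < ε) (hn : n = 0) {K : ∀ i, Set (StrongDual ℝ (E i))}
    {o : Ordinal} (ho : 1 ≤ o) :
    szlenkIter ε (weightedProdDualSet p E a K) o = ∅ := by
  apply Set.eq_empty_of_subset_empty
  refine (szlenkIter_antitone ho).trans ?_
  rw [szlenkIter_one, szlenkDeriv_subsingleton hε (WP_subsingleton hn)]

/-- The key one-derivation step. -/
theorem key_step (hq : 1 ≤ q)
    (hpq : (q = 1 ∧ p = ⊤) ∨ (1 < q ∧ p = ENNReal.ofReal (q / (q - 1))))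
    (ha : ∀ i, 0 ≤ a i) (hasum : (∑ i, a i ^ q) ≤ 1) (hε : 0 < ε)
    {A : ∀ i, Set (StrongDual ℝ (E i))} (hAb : ∀ i, IsBounded (A i)) :
    szlenkDeriv ε (weightedProdDualSet p E a A) ⊆
      ⋃ j, weightedProdDualSet p E a (Function.update A j (szlenkDeriv ε (A j))) := by
  classical
  rintro f ⟨hfQ, hf⟩
  obtain ⟨g, hg, hfg⟩ := hfQ
  by_contra hcon
  have hnot : ∀ j, g j ∉ szlenkDeriv ε (A j) := by
    intro j hj
    apply hcon
    refine Set.mem_iUnion.2 ⟨j, g, fun i => ?_, hfg⟩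
    by_cases hij : i = j
    · subst hij; rw [Function.update_self]; exact hj
    · rw [Function.update_of_ne hij]; exact hg i
  have hVex : ∀ j, ∃ V, IsWeakStarOpen V ∧ g j ∈ V ∧ Metric.diam (A j ∩ V) ≤ ε := by
    intro j
    have h1 := hnot j
    rw [szlenkDeriv, Set.mem_setOf_eq] at h1
    push_neg at h1
    obtain ⟨V, hV1, hV2, hV3⟩ := h1 (hg j)
    exact ⟨V, hV1, hV2, hV3⟩
  choose V hVo hVg hVd using hVex
  set W : Set (StrongDual ℝ (PiLp p E)) := ⋂ j ∈ (Finset.univ : Finset (Fin n)),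
    (if hj : a j = 0 then Set.univ
      else {f' : StrongDual ℝ (PiLp p E) | f'.comp ((a j)⁻¹ • ICLM p E j) ∈ V j}) with hWdef
  have hWo : IsWeakStarOpen W := by
    apply wsOpen_biInter_finset
    intro j _
    by_cases hj : a j = 0
    · rw [dif_pos hj]; exact wsOpen_univ
    · rw [dif_neg hj]; exact wsOpen_comp_preimage _ (hVo j)
  have hfW : f ∈ W := by
    refine Set.mem_iInter₂.2 fun j _ => ?_
    by_cases hj : a j = 0
    · rw [dif_pos hj]; exact Set.mem_univ f
    · rw [dif_neg hj]
      show f.comp ((a j)⁻¹ • ICLM p E j) ∈ V j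
      rw [comp_T_eq hfg hj]
      exact hVg j
  have hlt := hf W hWo hfW
  have hle : Metric.diam (weightedProdDualSet p E a A ∩ W) ≤ ε := by
    apply Metric.diam_le_of_forall_dist_le hε.le
    rintro f₁ ⟨⟨g₁, hg₁, hfg₁⟩, hf₁W⟩ f₂ ⟨⟨g₂, hg₂, hfg₂⟩, hf₂W⟩
    rw [dist_eq_norm]
    apply ContinuousLinearMap.opNorm_le_bound _ hε.le
    intro x
    have hx : (f₁ - f₂) x = ∑ i, a i * (g₁ i (x i) - g₂ i (x i)) := by
      rw [ContinuousLinearMap.sub_apply, hfg₁, hfg₂, ← Finset.sum_sub_distrib]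
      exact Finset.sum_congr rfl fun i _ => (mul_sub _ _ _).symm
    have hterm : ∀ i, a i * |g₁ i (x i) - g₂ i (x i)| ≤ a i * (ε * ‖x i‖) := by
      intro i
      by_cases hi : a i = 0
      · rw [hi, zero_mul, zero_mul]
      · apply mul_le_mul_of_nonneg_left _ (ha i)
        have hmem₁ : g₁ i ∈ A i ∩ V i := by
          refine ⟨hg₁ i, ?_⟩
          have := Set.mem_iInter₂.1 hf₁W i (Finset.mem_univ i)
          rw [dif_neg hi, Set.mem_setOf_eq] at this
          rwa [comp_T_eq hfg₁ hi] at this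
        have hmem₂ : g₂ i ∈ A i ∩ V i := by
          refine ⟨hg₂ i, ?_⟩
          have := Set.mem_iInter₂.1 hf₂W i (Finset.mem_univ i)
          rw [dif_neg hi, Set.mem_setOf_eq] at this
          rwa [comp_T_eq hfg₂ hi] at this
        have hdist : ‖g₁ i - g₂ i‖ ≤ ε := by
          rw [← dist_eq_norm]
          exact (Metric.dist_le_diam_of_mem ((hAb i).subset Set.inter_subset_left)
            hmem₁ hmem₂).trans (hVd i)
        calc |g₁ i (x i) - g₂ i (x i)| = ‖(g₁ i - g₂ i) (x i)‖ := by
              rw [ContinuousLinearMap.sub_apply]; rfl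
          _ ≤ ‖g₁ i - g₂ i‖ * ‖x i‖ := ContinuousLinearMap.le_opNorm _ _
          _ ≤ ε * ‖x i‖ := mul_le_mul_of_nonneg_right hdist (norm_nonneg _)
    calc ‖(f₁ - f₂) x‖ = |∑ i, a i * (g₁ i (x i) - g₂ i (x i))| := by rw [hx]; rfl
      _ ≤ ∑ i, |a i * (g₁ i (x i) - g₂ i (x i))| := Finset.abs_sum_le_sum_abs _ _
      _ = ∑ i, a i * |g₁ i (x i) - g₂ i (x i)| := by
          refine Finset.sum_congr rfl fun i _ => ?_
          rw [abs_mul, abs_of_nonneg (ha i)]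
      _ ≤ ∑ i, a i * (ε * ‖x i‖) := Finset.sum_le_sum fun i _ => hterm i
      _ = ε * ∑ i, a i * ‖x i‖ := by
          rw [Finset.mul_sum]
          exact Finset.sum_congr rfl fun i _ => by ring
      _ ≤ ε * ‖x‖ := mul_le_mul_of_nonneg_left (holder_le hq hpq ha hasum x) hε.le
  exact absurd hlt (not_lt.2 hle)

/-- Passing to a directed intersection of weak-* compact sets in one coordinate. -/
theorem mem_WP_iInter {ι : Type*} [Nonempty ι] {K : ∀ i, Set (StrongDual ℝ (E i))} {j : Fin n}
    {S : ι → Set (StrongDual ℝ (E j))} (hdir : Directed (· ⊇ ·) S)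
    (hcpt : ∀ t, IsWeakStarCompact (S t)) {f : StrongDual ℝ (PiLp p E)}
    (hf : ∀ t, f ∈ weightedProdDualSet p E a (Function.update K j (S t))) :
    f ∈ weightedProdDualSet p E a (Function.update K j (⋂ t, S t)) := by
  classical
  have t₀ : ι := Classical.arbitrary ι
  obtain ⟨g₀, hg₀, hfg₀⟩ := hf t₀
  by_cases hj : a j = 0
  · have hne : ∀ t, (StrongDual.toWeakDual '' S t : Set (WeakDual ℝ (E j))).Nonempty := by
      intro t
      obtain ⟨g, hg, _⟩ := hf t
      have := hg j
      rw [Function.update_self] at this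
      exact ⟨_, Set.mem_image_of_mem _ this⟩
    have hdir' : Directed (· ⊇ ·)
        (fun t => (StrongDual.toWeakDual '' S t : Set (WeakDual ℝ (E j)))) := by
      intro t₁ t₂
      obtain ⟨u, hu1, hu2⟩ := hdir t₁ t₂
      exact ⟨u, Set.image_mono hu1, Set.image_mono hu2⟩
    obtain ⟨φ, hφ⟩ := IsCompact.nonempty_iInter_of_directed_nonempty_isCompact_isClosed
      _ hdir' hne (fun t => hcpt t) (fun t => IsCompact.isClosed (hcpt t))
    rw [← Set.image_iInter e_bij] at hφ
    obtain ⟨h, hh, rfl⟩ := hφ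
    refine ⟨Function.update g₀ j h, fun k => ?_, fun x => ?_⟩
    · by_cases hkj : k = j
      · rw [hkj, Function.update_self, Function.update_self]
        exact hh
      · rw [Function.update_of_ne hkj, Function.update_of_ne hkj]
        have := hg₀ k
        rwa [Function.update_of_ne hkj] at this
    · rw [hfg₀ x]
      refine Finset.sum_congr rfl fun k _ => ?_
      by_cases hkj : k = j
      · rw [hkj, hj, zero_mul, zero_mul]
      · rw [Function.update_of_ne hkj]
  · refine ⟨g₀, fun k => ?_, hfg₀⟩
    by_cases hkj : k = j
    · rw [hkj, Function.update_self]
      refine Set.mem_iInter.2 fun t => ?_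
      obtain ⟨g', hg', hfg'⟩ := hf t
      rw [coord_unique hfg₀ hfg' hj]
      have := hg' j
      rwa [Function.update_self] at this
    · rw [Function.update_of_ne hkj]
      have := hg₀ k
      rwa [Function.update_of_ne hkj] at this

theorem exists_shrink {N : ℕ} {c : Fin N → ℕ} : ∀ {k : ℕ}, k ≤ ∑ i, c i →
    ∃ c' : Fin N → ℕ, (∀ i, c' i ≤ c i) ∧ ∑ i, c' i = k := by
  intro k
  induction k with
  | zero => exact fun _ => ⟨0, fun i => Nat.zero_le _, by simp⟩
  | succ k ih =>
      intro hk
      obtain ⟨c', hle, hsum⟩ := ih (Nat.le_of_succ_le hk)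
      have hlt : ∃ i, c' i < c i := by
        by_contra h
        push_neg at h
        have hcc : c = c' := funext fun i => le_antisymm (h i) (hle i)
        rw [hcc, hsum] at hk
        omega
      obtain ⟨i, hi⟩ := hlt
      refine ⟨Function.update c' i (c' i + 1), fun i' => ?_, ?_⟩
      · by_cases h : i' = i
        · subst h; rw [Function.update_self]; omega
        · rw [Function.update_of_ne h]; exact hle i'
      · have h2 := Finset.add_sum_erase Finset.univ c' (Finset.mem_univ i)
        rw [Finset.sum_update_of_mem (Finset.mem_univ i), ← Finset.erase_eq]
        omega

theorem exists_ge_of_sum_eq {N : ℕ} (hN : 0 < N) {c : Fin N → ℕ} {m : ℕ}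
    (hc : ∑ i, c i = N * m) : ∃ j, m ≤ c j := by
  by_contra h
  push_neg at h
  haveI : Nonempty (Fin N) := ⟨⟨0, hN⟩⟩
  have hlt : ∑ i, c i < ∑ _i : Fin N, m :=
    Finset.sum_lt_sum_of_nonempty Finset.univ_nonempty fun i _ => h i
  rw [Finset.sum_const, Finset.card_univ, Fintype.card_fin, smul_eq_mul] at hlt
  omega

end SzlenkAux

namespace SzlenkAux

open Set Bornology Function

variable {n : ℕ} {p : ℝ≥0∞} [Fact (1 ≤ p)] {E : Fin n → Type*} [∀ i, NormedAddCommGroup (E i)]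
    [∀ i, NormedSpace ℝ (E i)] [∀ i, CompleteSpace (E i)] {q : ℝ} {a : Fin n → ℝ} {ε : ℝ}

theorem main_induction (hq : 1 ≤ q)
    (hpq : (q = 1 ∧ p = ⊤) ∨ (1 < q ∧ p = ENNReal.ofReal (q / (q - 1))))
    (ha : ∀ i, 0 ≤ a i) (hasum : (∑ i, a i ^ q) ≤ 1) (hε : 0 < ε) :
    ∀ (α : Ordinal) (K : ∀ i, Set (StrongDual ℝ (E i))), (∀ i, IsWeakStarCompact (K i)) →
      szlenkIter ε (weightedProdDualSet p E a K) (Ordinal.omega0 ^ α) ⊆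
        ⋃ j, weightedProdDualSet p E a
          (Function.update K j (szlenkIter ε (K j) (Ordinal.omega0 ^ α))) := by
  intro α
  induction α using Ordinal.limitRecOn with
  | zero =>
      intro K hK
      rw [Ordinal.opow_zero]
      simp only [szlenkIter_one]
      exact key_step hq hpq ha hasum hε (fun i => IsWeakStarCompact.isBounded (hK i))
  | add_one α IH =>
      classical
      intro K hK
      by_cases hn : n = 0
      · rw [szlenkIter_WP_empty hε hn (Order.one_le_iff_pos.2
          (Ordinal.opow_pos _ Ordinal.omega0_pos))]
        exact Set.empty_subset _
      have hn0 : 0 < n := Nat.pos_of_ne_zero hn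
      haveI : Nonempty (Fin n) := ⟨⟨0, hn0⟩⟩
      set γ := Ordinal.omega0 ^ α with hγdef
      have hγpos : (0 : Ordinal) < γ := Ordinal.opow_pos _ Ordinal.omega0_pos
      have hsucc : Ordinal.omega0 ^ (α + 1) = γ * Ordinal.omega0 :=
        Ordinal.opow_add_one _ α
      have hWPb : IsBounded (weightedProdDualSet p E a K) :=
        IsWeakStarCompact.isBounded (WP_isWeakStarCompact hK)
      -- the finitary sub-claim
      have subclaim : ∀ m : ℕ, szlenkIter ε (weightedProdDualSet p E a K) (γ * m) ⊆
          ⋃ c ∈ Finset.Nat.antidiagonalTuple n m,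
            weightedProdDualSet p E a (fun i => szlenkIter ε (K i) (γ * c i)) := by
        intro m
        induction m with
        | zero =>
            intro f hf
            have hf' : f ∈ weightedProdDualSet p E a K := by simpa using hf
            have h0mem : (0 : Fin n → ℕ) ∈ Finset.Nat.antidiagonalTuple n 0 := by
              rw [Finset.Nat.mem_antidiagonalTuple]; simp
            refine Set.mem_biUnion h0mem ?_
            · have heq : (fun i => szlenkIter ε (K i) (γ * ((0 : Fin n → ℕ) i))) = K := by
                funext i
                simp
              rw [heq]
              exact hf'
        | succ m IHm =>
            intro f hf
            have hadd : (γ * ((m+1 : ℕ) : Ordinal)) = γ * m + γ := by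
              push_cast
              rw [Ordinal.add_one_eq_succ, Ordinal.mul_succ]
            have hf' : f ∈ szlenkIter ε
                (szlenkIter ε (weightedProdDualSet p E a K) (γ * m)) γ := by
              rw [← szlenkIter_add]
              rw [hadd] at hf
              exact hf
            set D := szlenkIter ε (weightedProdDualSet p E a K) (γ * m) with hDdef
            have hDb : IsBounded D := hWPb.subset (szlenkIter_subset _)
            have hfD : f ∈ D := szlenkIter_subset γ hf'
            set Cf : Finset (Fin n → ℕ) := (Finset.Nat.antidiagonalTuple n m).filter
              (fun c => f ∈ weightedProdDualSet p E a
                (fun i => szlenkIter ε (K i) (γ * c i))) with hCfdef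
            have hCfne : Cf.Nonempty := by
              obtain ⟨c₀, hc₀, hfc₀⟩ := Set.mem_iUnion₂.1 (IHm hfD)
              exact ⟨c₀, Finset.mem_filter.2 ⟨hc₀, hfc₀⟩⟩
            set cs : Fin n → ℕ := fun i => Cf.sup (fun c => c i) with hcsdef
            obtain ⟨c0, hc0Cf⟩ := hCfne
            have hc0 := Finset.mem_filter.1 hc0Cf
            obtain ⟨g0, hg0, hfg0⟩ := hc0.2
            have hwit : ∀ i, ∃ gi : StrongDual ℝ (E i),
                gi ∈ szlenkIter ε (K i) (γ * cs i) ∧ (a i ≠ 0 → gi = g0 i) := by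
              intro i
              obtain ⟨c, hcCf, hceq⟩ := Finset.exists_mem_eq_sup Cf ⟨c0, hc0Cf⟩ (fun c => c i)
              obtain ⟨g', hg', hfg'⟩ := (Finset.mem_filter.1 hcCf).2
              refine ⟨g' i, ?_, fun hi => coord_unique hfg' hfg0 hi⟩
              have : cs i = c i := hceq
              rw [this]
              exact hg' i
            choose gs hgs1 hgs2 using hwit
            have hfgs : ∀ x : PiLp p E, f x = ∑ i, a i * gs i (x i) := by
              intro x
              rw [hfg0 x]
              refine Finset.sum_congr rfl fun i _ => ?_
              by_cases hi : a i = 0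
              · rw [hi, zero_mul, zero_mul]
              · rw [hgs2 i hi]
            have hfcs : f ∈ weightedProdDualSet p E a
                (fun i => szlenkIter ε (K i) (γ * cs i)) := ⟨gs, hgs1, hfgs⟩
            have hsumcs : m ≤ ∑ i, cs i := by
              have h1 : ∑ i, c0 i = m := Finset.Nat.mem_antidiagonalTuple.1 hc0.1
              calc m = ∑ i, c0 i := h1.symm
                _ ≤ ∑ i, cs i := Finset.sum_le_sum fun i _ =>
                    Finset.le_sup (f := fun c => c i) hc0Cf
            rcases lt_or_eq_of_le hsumcs with hlt | heq
            · obtain ⟨c', hc'le, hc'sum⟩ := exists_shrink (show m + 1 ≤ ∑ i, cs i from hlt)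
              refine Set.mem_biUnion (Finset.Nat.mem_antidiagonalTuple.2 hc'sum) ?_
              exact WP_mono (fun i => szlenkIter_antitone
                (mul_le_mul_right (Nat.cast_le.2 (hc'le i)) γ)) hfcs
            · -- the singleton case
              have hcsmem : cs ∈ Finset.Nat.antidiagonalTuple n m :=
                Finset.Nat.mem_antidiagonalTuple.2 heq.symm
              have hCfsing : ∀ c ∈ Cf, c = cs := by
                intro c hc
                have h1 : ∀ i ∈ Finset.univ, c i ≤ cs i := fun i _ =>
                  Finset.le_sup (f := fun c => c i) hc
                have h2 : ∑ i, c i = ∑ i, cs i := by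
                  rw [Finset.Nat.mem_antidiagonalTuple.1 (Finset.mem_filter.1 hc).1, heq]
                funext i
                exact (Finset.sum_eq_sum_iff_of_le h1).1 h2 i (Finset.mem_univ i)
              have hsep : ∀ c : Fin n → ℕ, ∃ W, IsWeakStarOpen W ∧ f ∈ W ∧
                  (c ∈ (Finset.Nat.antidiagonalTuple n m).erase cs →
                    weightedProdDualSet p E a (fun i => szlenkIter ε (K i) (γ * c i)) ∩ W
                      = ∅) := by
                intro c
                by_cases hc : c ∈ (Finset.Nat.antidiagonalTuple n m).erase cs
                · have hfc : f ∉ weightedProdDualSet p E a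
                      (fun i => szlenkIter ε (K i) (γ * c i)) := by
                    intro hf''
                    have hcCf : c ∈ Cf :=
                      Finset.mem_filter.2 ⟨(Finset.mem_erase.1 hc).2, hf''⟩
                    exact (Finset.mem_erase.1 hc).1 (hCfsing c hcCf)
                  obtain ⟨W, h1, h2, h3⟩ := exists_wsOpen_disjoint
                    (WP_isWeakStarCompact (fun i => IsWeakStarCompact.szlenkIter_cpt (hK i) _)) hfc
                  exact ⟨W, h1, h2, fun _ => h3⟩
                · exact ⟨Set.univ, wsOpen_univ, Set.mem_univ f, fun h => absurd h hc⟩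
              choose W hWo hWf hWd using hsep
              set W' := ⋂ c ∈ (Finset.Nat.antidiagonalTuple n m).erase cs, W c with hW'def
              have hW'o : IsWeakStarOpen W' := wsOpen_biInter_finset _ (fun c _ => hWo c)
              have hfW' : f ∈ W' := Set.mem_iInter₂.2 fun c _ => hWf c
              have hDW' : D ∩ W' ⊆ weightedProdDualSet p E a
                  (fun i => szlenkIter ε (K i) (γ * cs i)) := by
                rintro x ⟨hxD, hxW⟩
                obtain ⟨c, hc, hxc⟩ := Set.mem_iUnion₂.1 (IHm hxD)
                by_cases hccs : c = cs
                · rwa [hccs] at hxc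
                · exfalso
                  have hmem : c ∈ (Finset.Nat.antidiagonalTuple n m).erase cs :=
                    Finset.mem_erase.2 ⟨hccs, hc⟩
                  have hxWc : x ∈ W c := Set.mem_iInter₂.1 hxW c hmem
                  exact Set.eq_empty_iff_forall_notMem.1 (hWd c hmem) x ⟨hxc, hxWc⟩
              have hstep1 : f ∈ szlenkIter ε (D ∩ W') γ :=
                szlenkIter_inter_open hW'o hDb γ ⟨hf', hfW'⟩
              have hstep2 : f ∈ szlenkIter ε (weightedProdDualSet p E a
                  (fun i => szlenkIter ε (K i) (γ * cs i))) γ :=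
                szlenkIter_mono hDW'
                  (IsWeakStarCompact.isBounded
                    (WP_isWeakStarCompact (fun i => IsWeakStarCompact.szlenkIter_cpt (hK i) _)))
                  γ hstep1
              have hIH := IH (fun i => szlenkIter ε (K i) (γ * cs i))
                (fun i => IsWeakStarCompact.szlenkIter_cpt (hK i) _) hstep2
              obtain ⟨j, hj⟩ := Set.mem_iUnion.1 hIH
              set c' := Function.update cs j (cs j + 1) with hc'def
              have hc'sum : ∑ i, c' i = m + 1 := by
                have h2 := Finset.add_sum_erase Finset.univ cs (Finset.mem_univ j)
                rw [hc'def, Finset.sum_update_of_mem (Finset.mem_univ j), ← Finset.erase_eq]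
                omega
              refine Set.mem_biUnion (Finset.Nat.mem_antidiagonalTuple.2 hc'sum) ?_
              have hconv : Function.update (fun i => szlenkIter ε (K i) (γ * cs i)) j
                  (szlenkIter ε (szlenkIter ε (K j) (γ * cs j)) γ) =
                  fun i => szlenkIter ε (K i) (γ * c' i) := by
                funext i
                by_cases hij : i = j
                · rw [hij, Function.update_self, hc'def, Function.update_self,
                    ← szlenkIter_add]
                  congr 1
                  push_cast
                  rw [Ordinal.add_one_eq_succ, Ordinal.mul_succ]
                · rw [Function.update_of_ne hij, hc'def, Function.update_of_ne hij]
              rw [hconv] at hj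
              exact hj
      -- end subclaim; main part of the successor case
      intro f hf
      rw [hsucc] at hf
      have hfm : ∀ m : ℕ, f ∈ szlenkIter ε (weightedProdDualSet p E a K) (γ * m) :=
        fun m => szlenkIter_antitone
          (mul_le_mul_right (Ordinal.nat_lt_omega0 m).le γ) hf
      have hjm : ∀ m : ℕ, ∃ j : Fin n, f ∈ weightedProdDualSet p E a
          (Function.update K j (szlenkIter ε (K j) (γ * m))) := by
        intro m
        obtain ⟨c, hc, hfc⟩ := Set.mem_iUnion₂.1 (subclaim (n * m) (hfm (n * m)))
        obtain ⟨j, hjge⟩ := exists_ge_of_sum_eq hn0 (Finset.Nat.mem_antidiagonalTuple.1 hc)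
        refine ⟨j, WP_mono (fun i => ?_) hfc⟩
        by_cases hij : i = j
        · rw [hij, Function.update_self]
          exact szlenkIter_antitone (mul_le_mul_right (Nat.cast_le.2 hjge) γ)
        · rw [Function.update_of_ne hij]
          exact szlenkIter_subset _
      choose F hF using hjm
      obtain ⟨j, hjinf⟩ := Finite.exists_infinite_fiber F
      have hjall : ∀ m : ℕ, f ∈ weightedProdDualSet p E a
          (Function.update K j (szlenkIter ε (K j) (γ * m))) := by
        intro m
        obtain ⟨m', hm'mem, hm'gt⟩ := (Set.infinite_coe_iff.1 hjinf).exists_gt m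
        have hFm' : F m' = j := hm'mem
        have hfm' := hF m'
        rw [hFm'] at hfm'
        refine WP_mono (fun i => ?_) hfm'
        by_cases hij : i = j
        · rw [hij, Function.update_self, Function.update_self]
          exact szlenkIter_antitone (mul_le_mul_right (Nat.cast_le.2 hm'gt.le) γ)
        · rw [Function.update_of_ne hij, Function.update_of_ne hij]
      have hdir : Directed (· ⊇ ·) (fun m : ℕ => szlenkIter ε (K j) (γ * m)) := by
        intro m₁ m₂
        exact ⟨max m₁ m₂,
          szlenkIter_antitone (mul_le_mul_right (Nat.cast_le.2 (le_max_left _ _)) γ),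
          szlenkIter_antitone (mul_le_mul_right (Nat.cast_le.2 (le_max_right _ _)) γ)⟩
      have hext := mem_WP_iInter (K := K) (j := j)
        (S := fun m : ℕ => szlenkIter ε (K j) (γ * m)) hdir
        (fun m => IsWeakStarCompact.szlenkIter_cpt (hK j) _) hjall
      refine Set.mem_iUnion.2 ⟨j, WP_mono (fun i => ?_) hext⟩
      by_cases hij : i = j
      · rw [hij, Function.update_self, Function.update_self]
        intro x hx
        rw [hsucc, szlenkIter_limit (Ordinal.isSuccLimit_mul_right hγpos Ordinal.isSuccLimit_omega0)]
        refine Set.mem_iInter₂.2 fun δ hδ => ?_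
        obtain ⟨b, hb, hδb⟩ := (Ordinal.lt_mul_iff_of_isSuccLimit Ordinal.isSuccLimit_omega0).1 hδ
        obtain ⟨m, rfl⟩ := Ordinal.lt_omega0.1 hb
        exact szlenkIter_antitone hδb.le (Set.mem_iInter.1 hx m)
      · rw [Function.update_of_ne hij, Function.update_of_ne hij]
  | limit α hα IH =>
      classical
      intro K hK f hf
      by_cases hn : n = 0
      · rw [szlenkIter_WP_empty hε hn (Order.one_le_iff_pos.2
          (Ordinal.opow_pos _ Ordinal.omega0_pos))] at hf
        exact absurd hf (Set.notMem_empty f)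
      have hn0 : 0 < n := Nat.pos_of_ne_zero hn
      haveI : Nonempty (Fin n) := ⟨⟨0, hn0⟩⟩
      have hβ : ∀ β, β < α → ∃ j, f ∈ weightedProdDualSet p E a
          (Function.update K j (szlenkIter ε (K j) (Ordinal.omega0 ^ β))) := by
        intro β hβα
        have hf' : f ∈ szlenkIter ε (weightedProdDualSet p E a K) (Ordinal.omega0 ^ β) :=
          szlenkIter_antitone (Ordinal.opow_le_opow_right Ordinal.omega0_pos hβα.le) hf
        exact Set.mem_iUnion.1 (IH β hβα K hK hf')
      choose F hF using hβ
      have hcof : ∃ j : Fin n, ∀ β, β < α → ∃ β', ∃ h1 : β ≤ β', ∃ h2 : β' < α,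
          F β' h2 = j := by
        by_contra hcon
        push_neg at hcon
        choose b hbα hbne using hcon
        obtain ⟨j₀, _, hj₀⟩ := Finset.exists_mem_eq_sup' Finset.univ_nonempty b
        set B := Finset.univ.sup' Finset.univ_nonempty b with hBdef
        have hBα : B < α := hj₀.trans_lt (hbα j₀)
        exact hbne (F B hBα) B (Finset.le_sup' b (Finset.mem_univ _)) hBα rfl
      obtain ⟨j, hj⟩ := hcof
      have hall : ∀ β : {o : Ordinal // o < α}, f ∈ weightedProdDualSet p E a
          (Function.update K j (szlenkIter ε (K j) (Ordinal.omega0 ^ β.1))) := by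
        rintro ⟨β, hβα⟩
        obtain ⟨β', h1, h2, hF'⟩ := hj β hβα
        have hmem := hF β' h2
        rw [hF'] at hmem
        refine WP_mono (fun i => ?_) hmem
        by_cases hij : i = j
        · rw [hij, Function.update_self, Function.update_self]
          exact szlenkIter_antitone (Ordinal.opow_le_opow_right Ordinal.omega0_pos h1)
        · rw [Function.update_of_ne hij, Function.update_of_ne hij]
      haveI : Nonempty {o : Ordinal // o < α} := ⟨⟨0, hα.pos⟩⟩
      have hdir : Directed (· ⊇ ·) (fun β : {o : Ordinal // o < α} =>
          szlenkIter ε (K j) (Ordinal.omega0 ^ β.1)) := by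
        intro β₁ β₂
        rcases le_total β₁.1 β₂.1 with h | h
        · exact ⟨β₂, szlenkIter_antitone
            (Ordinal.opow_le_opow_right Ordinal.omega0_pos h), subset_rfl⟩
        · exact ⟨β₁, subset_rfl, szlenkIter_antitone
            (Ordinal.opow_le_opow_right Ordinal.omega0_pos h)⟩
      have hext := mem_WP_iInter (K := K) (j := j)
        (S := fun β : {o : Ordinal // o < α} => szlenkIter ε (K j) (Ordinal.omega0 ^ β.1))
        hdir (fun β => IsWeakStarCompact.szlenkIter_cpt (hK j) _) hall
      refine Set.mem_iUnion.2 ⟨j, WP_mono (fun i => ?_) hext⟩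
      by_cases hij : i = j
      · rw [hij, Function.update_self, Function.update_self]
        intro x hx
        rw [szlenkIter_limit (Ordinal.isSuccLimit_opow Ordinal.one_lt_omega0 hα)]
        refine Set.mem_iInter₂.2 fun δ hδ => ?_
        obtain ⟨β, hβα, hδβ⟩ := (Ordinal.lt_opow_of_isSuccLimit Ordinal.omega0_ne_zero hα).1 hδ
        exact szlenkIter_antitone hδβ.le (Set.mem_iInter.1 hx ⟨β, hβα⟩)
      · rw [Function.update_of_ne hij, Function.update_of_ne hij]

end SzlenkAux

/-- For nonempty weak-*-compacts `K_i ⊆ E_i*`, reals `a_i ≥ 0` with `∑ a_i^q ≤ 1`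
(`1 ≤ q < ∞`, `p` predual to `q`), every ε > 0 and every ordinal `α`:
`s_ε^{ω^α}(∏ a_i K_i) ⊆ ⋃_j (a_1 K_1 × … × a_j s_ε^{ω^α}(K_j) × … × a_n K_n)`. -/
theorem szlenkIter_weightedProd_subset
    {n : ℕ} (E : Fin n → Type*) [∀ i, NormedAddCommGroup (E i)]
    [∀ i, NormedSpace ℝ (E i)] [∀ i, CompleteSpace (E i)]
    (K : ∀ i, Set (StrongDual ℝ (E i))) (hKne : ∀ i, (K i).Nonempty)
    (hKc : ∀ i, IsWeakStarCompact (K i))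
    (q : ℝ) (hq : 1 ≤ q) (p : ℝ≥0∞) [Fact (1 ≤ p)]
    (hpq : (q = 1 ∧ p = ⊤) ∨ (1 < q ∧ p = ENNReal.ofReal (q / (q - 1))))
    (a : Fin n → ℝ) (ha : ∀ i, 0 ≤ a i) (hasum : (∑ i, a i ^ q) ≤ 1)
    (ε : ℝ) (hε : 0 < ε) (α : Ordinal) :
    szlenkIter ε (weightedProdDualSet p E a K) (Ordinal.omega0 ^ α) ⊆
      ⋃ j : Fin n,
        weightedProdDualSet p E a
          (Function.update K j (szlenkIter ε (K j) (Ordinal.omega0 ^ α))) := by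
  exact SzlenkAux.main_induction hq hpq ha hasum hε α K hKc
end
end
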